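/- arXiv:1205.1015 — 8 statements merged into one kernel-verified Lean document; each statement's English description precedes it below -/
import Mathlib

section
/- Let k ≥ 1 and let f_1, …, f_k be real functions that are (k−1)-times differentiable on a real interval I (not reduced to a point). Assume that for every i with 1 ≤ i ≤ k the Wronskian W(f_1, …, f_i) has no zero in I. Then for any real constants a_1, …, a_k that are not all zero, the function a_1 f_1 + a_2 f_2 + … + a_k f_k has at most k−1 zeros in I counted with multiplicity; that is, the sum over all zeros x ∈ I of the multiplicity of x is at most k−1, where the multiplicity of a zero x of a C^{k−1} function g is the largest m ≤ k such that g(x) = g′(x) = … = g^{(m−1)}(x) = 0. -/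
/-!
Induction on `k`. As `W(f₀) = f₀` has no zero, `g = ∑ aᵢ fᵢ` may be divided by `f₀`:
`g / f₀ = a₀ + ∑_{i ≥ 1} aᵢ (fᵢ / f₀)` vanishes at least to the same orders as `g`, and by
Rolle's theorem (applied between consecutive zeros, and at each zero of order `m` giving one of
order `m - 1` of the derivative) its derivative `∑_{i ≥ 1} aᵢ (fᵢ / f₀)'` has at most one zero
fewer, counted with multiplicity. The derived family again has nonvanishing Wronskians because
`W(f₀, …, fⱼ) = f₀ ^ (j + 1) · W((f₁ / f₀)', …, (fⱼ / f₀)')`, so the induction hypothesis applies.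
-/

/-- The Wronskian of the first `j` functions of the family `f`, with derivatives
taken within the set `I`: the determinant of the `j × j` matrix whose `(r,c)` entry
is the `r`-th derivative (within `I`) of `f c` (indices starting from `0`). -/
noncomputable def wronskianOn (I : Set ℝ) (f : ℕ → ℝ → ℝ) (j : ℕ) (x : ℝ) : ℝ :=
  (Matrix.of fun r c : Fin j => iteratedDerivWithin (r : ℕ) (f (c : ℕ)) I x).det

open Set Finset

/-- Only meaningful for `m` at most one more than the order of differentiability of `g` on `I`:
beyond it, `iteratedDerivWithin` takes junk values, which is why multiplicities are capped below. -/
def VanishesToOrderWithin (g : ℝ → ℝ) (I : Set ℝ) (m : ℕ) (x : ℝ) : Prop :=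
  ∀ j < m, iteratedDerivWithin j g I x = 0

namespace VanishesToOrderWithin

variable {g u : ℝ → ℝ} {I : Set ℝ} {m : ℕ} {x : ℝ}

theorem apply_eq_zero (h : VanishesToOrderWithin g I m x) (hm : 0 < m) : g x = 0 := by
  simpa using h 0 hm

theorem derivWithin (h : VanishesToOrderWithin g I m x) :
    VanishesToOrderWithin (derivWithin g I) I (m - 1) x := fun j hj => by
  rw [← iteratedDerivWithin_succ']
  exact h (j + 1) (by omega)

theorem congr {g' : ℝ → ℝ} (h : VanishesToOrderWithin g I m x) (hgg' : EqOn g g' I)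
    (hx : x ∈ I) : VanishesToOrderWithin g' I m x := fun j hj => by
  rw [← iteratedDerivWithin_congr hgg' hx]
  exact h j hj

theorem mul_right {n : ℕ} (h : VanishesToOrderWithin g I m x) (hI : UniqueDiffOn ℝ I)
    (hx : x ∈ I) (hg : ContDiffOn ℝ n g I) (hu : ContDiffOn ℝ n u I) (hm : m ≤ n + 1) :
    VanishesToOrderWithin (fun y => g y * u y) I m x := fun j hj => by
  have hjn : (j : WithTop ℕ∞) ≤ n := by exact_mod_cast (show j ≤ n by omega)
  rw [show (fun y => g y * u y) = g * u from rfl,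
    iteratedDerivWithin_mul hx hI ((hg x hx).of_le hjn) ((hu x hx).of_le hjn)]
  refine Finset.sum_eq_zero fun i hi => ?_
  rw [h i (by grind), mul_zero, zero_mul]

theorem div {n : ℕ} (h : VanishesToOrderWithin g I m x) (hI : UniqueDiffOn ℝ I) (hx : x ∈ I)
    (hg : ContDiffOn ℝ n g I) (hu : ContDiffOn ℝ n u I) (hu0 : ∀ y ∈ I, u y ≠ 0)
    (hm : m ≤ n + 1) : VanishesToOrderWithin (fun y => g y / u y) I m x := by
  simpa only [div_eq_mul_inv, Pi.inv_apply] using h.mul_right hI hx hg (hu.inv hu0) hm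

end VanishesToOrderWithin

theorem sum_eq_zero_of_vanishesToOrderWithin {g : ℝ → ℝ} {I : Set ℝ} (hg : ∀ x ∈ I, g x ≠ 0)
    {S : Finset ℝ} {m : ℝ → ℕ} (hS : ∀ x ∈ S, x ∈ I ∧ VanishesToOrderWithin g I (m x) x) :
    ∑ x ∈ S, m x = 0 :=
  sum_eq_zero fun x hx => Nat.eq_zero_of_not_pos fun hm =>
    hg x (hS x hx).1 ((hS x hx).2.apply_eq_zero hm)

theorem exists_mem_Ioo_derivWithin_eq_zero {I : Set ℝ} (hI : I.OrdConnected) {h : ℝ → ℝ}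
    (hh : DifferentiableOn ℝ h I) {a b : ℝ} (ha : a ∈ I) (hb : b ∈ I) (hab : a < b)
    (hha : h a = 0) (hhb : h b = 0) : ∃ y ∈ Ioo a b, derivWithin h I y = 0 := by
  have hIoo : Ioo a b ⊆ I := Ioo_subset_Icc_self.trans (hI.out ha hb)
  refine exists_hasDerivAt_eq_zero hab (hh.continuousOn.mono (hI.out ha hb))
    (hha.trans hhb.symm) fun y hy => ?_
  exact (hh y (hIoo hy)).hasDerivWithinAt.hasDerivAt
    (Filter.mem_of_superset (isOpen_Ioo.mem_nhds hy) hIoo)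

theorem exists_finset_derivWithin_eq_zero {I : Set ℝ} (hI : I.OrdConnected) {h : ℝ → ℝ}
    (hh : DifferentiableOn ℝ h I) (S : Finset ℝ) (hS : ∀ x ∈ S, x ∈ I ∧ h x = 0) :
    ∃ R : Finset ℝ, Disjoint R S ∧ (∀ y ∈ R, y ∈ I ∧ derivWithin h I y = 0) ∧
      #S ≤ #R + 1 ∧ ∀ y ∈ R, ∃ x ∈ S, y < x := by
  classical
  induction S using Finset.induction_on_max with
  | empty => exact ⟨∅, by simp⟩
  | insert b S hlt ih =>
    obtain ⟨R, hRS, hR, hcard, hRlt⟩ := ih fun x hx => hS x (mem_insert_of_mem hx)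
    obtain ⟨hbI, hb0⟩ := hS b (mem_insert_self b S)
    have hbS : b ∉ S := fun hb => lt_irrefl b (hlt b hb)
    rcases S.eq_empty_or_nonempty with rfl | hne
    · exact ⟨∅, by simp⟩
    obtain ⟨hzI, hz0⟩ := hS _ (mem_insert_of_mem (S.max'_mem hne))
    obtain ⟨y, ⟨hzy, hyb⟩, hy⟩ := exists_mem_Ioo_derivWithin_eq_zero hI hh hzI hbI
      (hlt _ (S.max'_mem hne)) hz0 hb0
    have hyS : ∀ x ∈ S, x < y := fun x hx => (S.le_max' x hx).trans_lt hzy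
    have hRb : ∀ r ∈ R, r < S.max' hne := fun r hr => by
      obtain ⟨x, hx, hrx⟩ := hRlt r hr
      exact hrx.trans_le (S.le_max' x hx)
    refine ⟨insert y R, ?_, ?_, ?_, ?_⟩
    · rw [Finset.disjoint_insert_left, Finset.disjoint_insert_right, Finset.mem_insert, not_or]
      exact ⟨⟨hyb.ne, fun hyS' => lt_irrefl y (hyS y hyS')⟩,
        fun hbR => (hRb b hbR).not_gt (hlt _ (S.max'_mem hne)), hRS⟩
    · intro r hr
      rcases mem_insert.mp hr with rfl | hr
      · exact ⟨hI.out hzI hbI ⟨hzy.le, hyb.le⟩, hy⟩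
      · exact hR r hr
    · rw [card_insert_of_notMem hbS, card_insert_of_notMem
        fun hyR => (hRb y hyR).not_gt hzy]
      omega
    · intro r hr
      rcases mem_insert.mp hr with rfl | hr
      · exact ⟨b, mem_insert_self b S, hyb⟩
      · obtain ⟨x, hx, hrx⟩ := hRlt r hr
        exact ⟨x, mem_insert_of_mem hx, hrx⟩

theorem exists_vanishesToOrderWithin_derivWithin {I : Set ℝ} (hI : I.OrdConnected) {h : ℝ → ℝ}
    (hh : DifferentiableOn ℝ h I) {K : ℕ} (hK : 1 ≤ K) (S : Finset ℝ) (m : ℝ → ℕ)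
    (hS : ∀ x ∈ S, x ∈ I ∧ m x ≤ K + 1 ∧ VanishesToOrderWithin h I (m x) x) :
    ∃ (T : Finset ℝ) (m' : ℝ → ℕ),
      (∀ x ∈ T, x ∈ I ∧ m' x ≤ K ∧ VanishesToOrderWithin (derivWithin h I) I (m' x) x) ∧
      ∑ x ∈ S, m x ≤ ∑ x ∈ T, m' x + 1 := by
  classical
  set Z := S.filter (0 < m ·)
  have hZ : ∀ x ∈ Z, x ∈ S ∧ 0 < m x := fun x hx => mem_filter.mp hx
  obtain ⟨R, hRZ, hR, hcard, -⟩ := exists_finset_derivWithin_eq_zero hI hh Z fun x hx =>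
    ⟨(hS x (hZ x hx).1).1, (hS x (hZ x hx).1).2.2.apply_eq_zero (hZ x hx).2⟩
  refine ⟨R ∪ Z, fun x => if x ∈ Z then m x - 1 else 1, fun x hx => ?_, ?_⟩
  · by_cases hxZ : x ∈ Z
    · obtain ⟨hxI, hxK, hx⟩ := hS x (hZ x hxZ).1
      simpa only [if_pos hxZ] using ⟨hxI, by omega, hx.derivWithin⟩
    · have hxR : x ∈ R := by simpa [hxZ] using hx
      simp only [if_neg hxZ]
      refine ⟨(hR x hxR).1, hK, fun j hj => ?_⟩
      simpa [Nat.lt_one_iff.mp hj] using (hR x hxR).2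
  · have hSZ : ∑ x ∈ S, m x = ∑ x ∈ Z, m x :=
      (sum_filter_of_ne fun x _ hx => Nat.pos_of_ne_zero hx).symm
    have hZsum : ∑ x ∈ Z, m x = ∑ x ∈ Z, (m x - 1) + #Z := by
      rw [card_eq_sum_ones, ← sum_add_distrib]
      exact sum_congr rfl fun x hx => by have := (hZ x hx).2; omega
    have hRsum : ∑ x ∈ R, (if x ∈ Z then m x - 1 else 1) = #R := by
      rw [card_eq_sum_ones]
      exact sum_congr rfl fun x hx => if_neg (disjoint_left.mp hRZ hx)
    rw [sum_union hRZ, hRsum, sum_congr rfl fun x hx => if_pos hx, hSZ, hZsum]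
    omega

theorem wronskianOn_congr {I : Set ℝ} {f g : ℕ → ℝ → ℝ} {j : ℕ} {x : ℝ} (hx : x ∈ I)
    (hfg : ∀ c < j, EqOn (f c) (g c) I) : wronskianOn I f j x = wronskianOn I g j x := by
  unfold wronskianOn
  congr 1
  ext r c
  exact iteratedDerivWithin_congr (hfg c c.isLt) hx

theorem wronskianOn_one (I : Set ℝ) (f : ℕ → ℝ → ℝ) (x : ℝ) : wronskianOn I f 1 x = f 0 x := by
  simp [wronskianOn]

theorem wronskianOn_mul_right {I : Set ℝ} (hI : UniqueDiffOn ℝ I) {h : ℕ → ℝ → ℝ}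
    {u : ℝ → ℝ} {n j : ℕ} (hj : j ≤ n + 1) (hh : ∀ c < j, ContDiffOn ℝ n (h c) I)
    (hu : ContDiffOn ℝ n u I) {x : ℝ} (hx : x ∈ I) :
    wronskianOn I (fun c y => h c y * u y) j x = u x ^ j * wronskianOn I h j x := by
  set L : Matrix (Fin j) (Fin j) ℝ := Matrix.of fun r s =>
    if s ≤ r then ((r : ℕ).choose s : ℝ) * iteratedDerivWithin (r - s) u I x else 0
  have hL : L.det = u x ^ j := by
    rw [Matrix.det_of_isLowerTriangular L fun r s hrs => if_neg (not_le.mpr hrs)]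
    simp [L]
  -- Leibniz rule: the Wronskian matrix of the `h c * u` is `L` times that of the `h c`.
  unfold wronskianOn
  rw [← hL, ← Matrix.det_mul]
  congr 1
  ext r c
  have hr : (r : WithTop ℕ∞) ≤ n := by exact_mod_cast (show (r : ℕ) ≤ n by omega)
  have hrange : (range j).filter (· ≤ (r : ℕ)) = range (r + 1) := by
    ext i
    simp only [mem_filter, Finset.mem_range]
    omega
  rw [Matrix.mul_apply, Matrix.of_apply]
  change iteratedDerivWithin r (h c * u) I x = _
  rw [iteratedDerivWithin_mul hx hI ((hh c c.isLt x hx).of_le hr) ((hu x hx).of_le hr)]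
  symm
  refine (Fin.sum_univ_eq_sum_range (fun i => (if i ≤ (r : ℕ) then ((r : ℕ).choose i : ℝ) *
    iteratedDerivWithin (r - i) u I x else 0) * iteratedDerivWithin i (h c) I x) j).trans ?_
  simp only [ite_mul, zero_mul]
  rw [← sum_filter, hrange]
  exact sum_congr rfl fun i _ => by ring

theorem wronskianOn_succ_of_eqOn_one {I : Set ℝ} {h : ℕ → ℝ → ℝ} (h0 : EqOn (h 0) 1 I)
    {j : ℕ} {x : ℝ} (hx : x ∈ I) :
    wronskianOn I h (j + 1) x = wronskianOn I (fun c => derivWithin (h (c + 1)) I) j x := by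
  have hcol : ∀ s : ℕ, iteratedDerivWithin s (h 0) I x = if s = 0 then 1 else 0 := fun s => by
    rw [iteratedDerivWithin_congr h0 hx, Pi.one_def, iteratedDerivWithin_const]
  unfold wronskianOn
  rw [Matrix.det_succ_column_zero, Finset.sum_eq_single 0]
  · simp [hcol, Matrix.submatrix, iteratedDerivWithin_succ']
  · intro s _ hs
    simp [hcol, Fin.val_ne_zero_iff.mpr hs]
  · simp

theorem wronskianOn_succ_eq_pow_mul {I : Set ℝ} (hI : UniqueDiffOn ℝ I) {f : ℕ → ℝ → ℝ}
    {n j : ℕ} (hj : j ≤ n) (hf : ∀ c ≤ j, ContDiffOn ℝ n (f c) I)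
    (hf0 : ∀ y ∈ I, f 0 y ≠ 0) {x : ℝ} (hx : x ∈ I) :
    wronskianOn I f (j + 1) x = f 0 x ^ (j + 1) *
      wronskianOn I (fun c => derivWithin (fun y => f (c + 1) y / f 0 y) I) j x := by
  have hquot : ∀ c ≤ j, ContDiffOn ℝ n (fun y => f c y / f 0 y) I :=
    fun c hc => (hf c hc).div (hf 0 (Nat.zero_le j)) hf0
  rw [wronskianOn_congr hx (g := fun c y => f c y / f 0 y * f 0 y)
      fun c _ y hy => (div_mul_cancel₀ _ (hf0 y hy)).symm,
    wronskianOn_mul_right hI (by omega) (fun c hc => hquot c (by omega)) (hf 0 (Nat.zero_le j)) hx,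
    wronskianOn_succ_of_eqOn_one (fun y hy => div_self (hf0 y hy)) hx]

theorem wronskianOn_derivWithin_div_ne_zero {I : Set ℝ} (hI : UniqueDiffOn ℝ I)
    {f : ℕ → ℝ → ℝ} {k : ℕ} (hf : ∀ i ≤ k, ContDiffOn ℝ k (f i) I)
    (hW : ∀ i ≤ k, ∀ x ∈ I, wronskianOn I f (i + 1) x ≠ 0) {i : ℕ} (hi : i < k) {x : ℝ}
    (hx : x ∈ I) :
    wronskianOn I (fun c => derivWithin (fun y => f (c + 1) y / f 0 y) I) (i + 1) x ≠ 0 := by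
  have hf0 : ∀ y ∈ I, f 0 y ≠ 0 := fun y hy => wronskianOn_one I f y ▸ hW 0 (Nat.zero_le k) y hy
  have := hW (i + 1) hi x hx
  rw [wronskianOn_succ_eq_pow_mul hI hi (fun c hc => hf c (by omega)) hf0 hx] at this
  exact right_ne_zero_of_mul this

theorem eqOn_derivWithin_sum_div {I : Set ℝ} (hI : UniqueDiffOn ℝ I) {f : ℕ → ℝ → ℝ} (k : ℕ)
    (hf : ∀ i ≤ k, DifferentiableOn ℝ (f i) I) (hf0 : ∀ y ∈ I, f 0 y ≠ 0) (a : ℕ → ℝ) :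
    EqOn (derivWithin (fun y => (∑ i ∈ range (k + 1), a i * f i y) / f 0 y) I)
      (fun y => ∑ i ∈ range k, a (i + 1) * derivWithin (fun y => f (i + 1) y / f 0 y) I y) I := by
  intro x hx
  have hsplit : EqOn (fun y => (∑ i ∈ range (k + 1), a i * f i y) / f 0 y)
      (fun y => a 0 + ∑ i ∈ range k, a (i + 1) * (f (i + 1) y / f 0 y)) I := fun y hy => by
    dsimp only
    rw [sum_range_succ', add_comm, add_div, mul_div_assoc, div_self (hf0 y hy), mul_one,
      sum_div]
    simp only [mul_div_assoc]
  have hderiv : ∀ i ∈ range k, HasDerivWithinAt (fun y => a (i + 1) * (f (i + 1) y / f 0 y))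
      (a (i + 1) * derivWithin (fun y => f (i + 1) y / f 0 y) I x) I x := fun i hi =>
    (((hf (i + 1) (by grind)).div (hf 0 (Nat.zero_le k)) hf0 x hx).hasDerivWithinAt).const_mul _
  rw [derivWithin_congr hsplit (hsplit hx)]
  exact ((HasDerivWithinAt.fun_sum hderiv).const_add (a 0)).derivWithin (hI x hx)

theorem sum_lt_of_wronskianOn_ne_zero {I : Set ℝ} (hI : I.OrdConnected) (hI' : UniqueDiffOn ℝ I)
    (k : ℕ) {f : ℕ → ℝ → ℝ} (hf : ∀ i < k, ContDiffOn ℝ (k - 1 : ℕ) (f i) I)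
    (hW : ∀ i < k, ∀ x ∈ I, wronskianOn I f (i + 1) x ≠ 0) {a : ℕ → ℝ} (ha : ∃ i < k, a i ≠ 0)
    (S : Finset ℝ) (m : ℝ → ℕ)
    (hS : ∀ x ∈ S, x ∈ I ∧ m x ≤ k ∧
      VanishesToOrderWithin (fun y => ∑ i ∈ range k, a i * f i y) I (m x) x) :
    ∑ x ∈ S, m x < k := by
  induction k generalizing f a S m with
  | zero => simp at ha
  | succ k ih =>
    have hfk : ∀ i ≤ k, ContDiffOn ℝ k (f i) I := fun i hi => by simpa using hf i (by omega)
    have hf0 : ∀ y ∈ I, f 0 y ≠ 0 := fun y hy => wronskianOn_one I f y ▸ hW 0 k.succ_pos y hy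
    set g := fun y => ∑ i ∈ range (k + 1), a i * f i y
    have hg : ContDiffOn ℝ k g I :=
      ContDiffOn.sum fun i hi => (hfk i (by grind)).const_smul (a i)
    by_cases hb : ∃ i < k, a (i + 1) ≠ 0
    · obtain ⟨i₀, hi₀, hai₀⟩ := hb
      have hk : k ≠ 0 := by omega
      set H := fun y => g y / f 0 y
      have hH : ContDiffOn ℝ k H I := hg.div (hfk 0 (Nat.zero_le k)) hf0
      have hHS : ∀ x ∈ S, x ∈ I ∧ m x ≤ k + 1 ∧ VanishesToOrderWithin H I (m x) x :=
        fun x hx => ⟨(hS x hx).1, (hS x hx).2.1,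
          (hS x hx).2.2.div hI' (hS x hx).1 hg (hfk 0 (Nat.zero_le k)) hf0 (hS x hx).2.1⟩
      obtain ⟨T, m', hT, hsum⟩ := exists_vanishesToOrderWithin_derivWithin hI
        (hH.differentiableOn (by exact_mod_cast hk)) (Nat.one_le_iff_ne_zero.mpr hk) S m hHS
      have hF : ∀ i < k, ContDiffOn ℝ (k - 1 : ℕ)
          (derivWithin (fun y => f (i + 1) y / f 0 y) I) I := fun i hi =>
        ((hfk (i + 1) hi).div (hfk 0 (Nat.zero_le k)) hf0).derivWithin hI'
          (by exact_mod_cast (show k - 1 + 1 ≤ k by omega))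
      have hTF := ih hF (fun i hi x hx => wronskianOn_derivWithin_div_ne_zero hI' hfk
        (fun i hi => hW i (by omega)) hi hx) ⟨i₀, hi₀, hai₀⟩ T m' fun x hx => by
        obtain ⟨hxI, hmx, hHx⟩ := hT x hx
        exact ⟨hxI, hmx, hHx.congr (eqOn_derivWithin_sum_div hI' k
          (fun i hi => (hfk i hi).differentiableOn (by exact_mod_cast hk)) hf0 a) hxI⟩
      omega
    · push Not at hb
      obtain ⟨_ | i₀, hi₀, hai₀⟩ := ha
      · have hg0 : ∀ y ∈ I, g y ≠ 0 := fun y hy => by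
          have hsum : ∑ i ∈ range k, a (i + 1) * f (i + 1) y = 0 :=
            sum_eq_zero fun i hi => by rw [hb i (Finset.mem_range.mp hi), zero_mul]
          simpa [g, sum_range_succ', hsum] using mul_ne_zero hai₀ (hf0 y hy)
        rw [sum_eq_zero_of_vanishesToOrderWithin hg0 fun x hx => ⟨(hS x hx).1, (hS x hx).2.2⟩]
        exact k.succ_pos
      · exact absurd (hb i₀ (by omega)) hai₀

theorem stmt0_general (k : ℕ) (I : Set ℝ) (hI : I.OrdConnected) (hI' : I.Nontrivial)
    (f : ℕ → ℝ → ℝ)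
    (hdiff : ∀ i < k, ContDiffOn ℝ (k - 1 : ℕ) (f i) I)
    (hW : ∀ i, 1 ≤ i → i ≤ k → ∀ x ∈ I, wronskianOn I f i x ≠ 0)
    (a : ℕ → ℝ) (ha : ∃ i < k, a i ≠ 0) :
    ∀ S : Finset ℝ,
      (∀ x ∈ S, x ∈ I ∧ (∑ i ∈ Finset.range k, a i * f i x) = 0) →
      (∑ x ∈ S,
        sSup {m : ℕ | m ≤ k ∧ ∀ j < m,
          iteratedDerivWithin j (fun y => ∑ i ∈ Finset.range k, a i * f i y) I x = 0})
        ≤ k - 1 := by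
  intro S hS
  have hIu : UniqueDiffOn ℝ I :=
    uniqueDiffOn_convex hI.convex (hI.convex.nontrivial_iff_nonempty_interior.mp hI')
  have hmult : ∀ x, sSup {m : ℕ | m ≤ k ∧ VanishesToOrderWithin
      (fun y => ∑ i ∈ range k, a i * f i y) I m x} ∈
      {m : ℕ | m ≤ k ∧ VanishesToOrderWithin (fun y => ∑ i ∈ range k, a i * f i y) I m x} :=
    fun x => Nat.sSup_mem ⟨0, Nat.zero_le k, fun j hj => absurd hj j.not_lt_zero⟩
      ⟨k, fun m hm => hm.1⟩
  exact Nat.le_sub_one_of_lt <| sum_lt_of_wronskianOn_ne_zero hI hIu k hdiff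
    (fun i hi => hW (i + 1) (by omega) hi) ha S _ fun x hx => ⟨(hS x hx).1, hmult x⟩

/-- Theorem (zeros with multiplicity of a linear combination when the Wronskians do not
vanish): if `f 0, …, f (k-1)` are `(k-1)`-times differentiable on an interval `I` and all
the Wronskians `W(f 0, …, f (i-1))`, `1 ≤ i ≤ k`, have no zero on `I`, then any nontrivial
linear combination has at most `k - 1` zeros on `I` counted with multiplicity. -/
theorem stmt0 (k : ℕ) (hk : 1 ≤ k) (I : Set ℝ) (hI : I.OrdConnected) (hI' : I.Nontrivial)
    (f : ℕ → ℝ → ℝ)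
    (hdiff : ∀ i < k, ContDiffOn ℝ (k - 1 : ℕ) (f i) I)
    (hW : ∀ i, 1 ≤ i → i ≤ k → ∀ x ∈ I, wronskianOn I f i x ≠ 0)
    (a : ℕ → ℝ) (ha : ∃ i < k, a i ≠ 0) :
    ∀ S : Finset ℝ,
      (∀ x ∈ S, x ∈ I ∧ (∑ i ∈ Finset.range k, a i * f i x) = 0) →
      (∑ x ∈ S,
        sSup {m : ℕ | m ≤ k ∧ ∀ j < m,
          iteratedDerivWithin j (fun y => ∑ i ∈ Finset.range k, a i * f i y) I x = 0})
        ≤ k - 1 :=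
  stmt0_general k I hI hI' f hdiff hW a ha
end

section
/- Let f_1, …, f_k be real analytic functions on a real interval I, write W_j = W(f_1, …, f_j) for 1 ≤ j ≤ k and W_0 = 1, and define recursively R_0 = f_1 + … + f_k and R_{i+1} = (W_{i+1}² / W_i) · (R_i / W_{i+1})′. Then on any subinterval of I on which W_1, …, W_{k−1} are all nonvanishing, each R_i (0 ≤ i ≤ k−1) is well-defined and analytic, and R_{k−1} = W_k. -/
/-- The sequence of Frobenius, defined by `R 0 = f 1 + … + f k` and
`R (i+1) = (W_{i+1}² / W_i) · (R i / W_{i+1})′`, with derivatives taken within `I`. -/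
noncomputable def frobR (I : Set ℝ) (f : ℕ → ℝ → ℝ) (k : ℕ) : ℕ → ℝ → ℝ
  | 0 => fun x => ∑ i ∈ Finset.range k, f i x
  | (i + 1) => fun x =>
      (wronskianOn I f (i + 1) x) ^ 2 / wronskianOn I f i x *
        derivWithin (fun y => frobR I f k i y / wronskianOn I f (i + 1) y) I x

/-!
Write `S = f₁ + ⋯ + f_k` and `V_i = W(f₁, …, f_i, S)`. On the set where `W₁, …, W_{k-1}` do not
vanish, which is open in `I`, one shows `R_i = V_i` by induction. By the quotient rule the recursion
reads `R_{i+1} = (W_{i+1} V_i′ - V_i W_{i+1}′) / W_i`. Differentiating a Wronskian only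
differentiates its last row, so the four determinants in the numerator are the minors of the
Wronskian matrix of `(f₁, …, f_{i+1}, S)` obtained by deleting one of its last two rows and one of
its last two columns, and the Desnanot–Jacobi identity turns the numerator into `W_i V_{i+1}`.
Finally `V_{k-1} = W_k`, since subtracting the other columns from the last one leaves `f_k`, and
each `R_i` is analytic because `V_i` is.
-/

open Fin Function Set Filter Topology

theorem Set.OrdConnected.uniqueDiffOn {s : Set ℝ} (hs : s.OrdConnected) (hs' : s.Nontrivial) :
    UniqueDiffOn ℝ s := by
  obtain ⟨a, ha, b, hb, hab⟩ := hs'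
  wlog h : a < b generalizing a b
  · exact this b hb a ha hab.symm (hab.symm.lt_of_le (not_lt.1 h))
  refine uniqueDiffOn_convex hs.convex ⟨(a + b) / 2, interior_mono (hs.out ha hb) ?_⟩
  rw [interior_Icc]
  constructor <;> linarith

section Calculus
variable {𝕜 : Type*} [NontriviallyNormedField 𝕜] {s : Set 𝕜} {x : 𝕜}

protected theorem AnalyticOn.iteratedDerivWithin {F : Type*} [NormedAddCommGroup F]
    [NormedSpace 𝕜 F] {f : 𝕜 → F} (h : AnalyticOn 𝕜 f s) (hs : UniqueDiffOn 𝕜 s) (n : ℕ) :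
    AnalyticOn 𝕜 (iteratedDerivWithin n f s) s := by
  rw [iteratedDerivWithin_eq_equiv_comp]
  exact (ContinuousMultilinearMap.piFieldEquiv 𝕜 (Fin n) F).symm.toContinuousLinearEquiv
    |>.toContinuousLinearMap.comp_analyticOn (h.iteratedFDerivWithin hs n)

theorem AnalyticOn.hasDerivWithinAt_iteratedDerivWithin {F : Type*} [NormedAddCommGroup F]
    [NormedSpace 𝕜 F] {f : 𝕜 → F} (h : AnalyticOn 𝕜 f s) (hs : UniqueDiffOn 𝕜 s) (n : ℕ)
    (hx : x ∈ s) :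
    HasDerivWithinAt (iteratedDerivWithin n f s) (iteratedDerivWithin (n + 1) f s x) s x := by
  rw [iteratedDerivWithin_succ]
  exact ((h.iteratedDerivWithin hs n).differentiableOn x hx).hasDerivWithinAt

variable {n : Type*} [Fintype n] [DecidableEq n]

theorem AnalyticOn.matrix_det {A : 𝕜 → Matrix n n 𝕜}
    (h : ∀ r c, AnalyticOn 𝕜 (fun x => A x r c) s) : AnalyticOn 𝕜 (fun x => (A x).det) s := by
  simp_rw [Matrix.det_apply']
  exact Finset.analyticOn_fun_sum _ fun σ _ =>
    analyticOn_const.mul (Finset.analyticOn_fun_prod _ fun i _ => h _ _)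

theorem HasDerivWithinAt.matrix_det {A : 𝕜 → Matrix n n 𝕜} {B : Matrix n n 𝕜}
    (h : ∀ r, HasDerivWithinAt (fun y => A y r) (B r) s x) :
    HasDerivWithinAt (fun y => (A y).det) (∑ r, ((A x).updateRow r (B r)).det) s x := by
  let D : ContinuousMultilinearMap 𝕜 (fun _ : n => n → 𝕜) 𝕜 :=
    ⟨Matrix.detRowAlternating.toMultilinearMap, continuous_id.matrix_det⟩
  have := (HasFDerivWithinAt.multilinear_comp (f := D) fun r => (h r).hasFDerivWithinAt)
    |>.hasDerivWithinAt
  simp only [FunLike.coe_sum, Finset.sum_apply, ContinuousLinearMap.comp_apply,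
    ContinuousMultilinearMap.toContinuousLinearMap_apply,
    ContinuousLinearMap.toSpanSingleton_apply, one_smul] at this
  exact this

end Calculus

theorem Fin.castSucc_last_succAbove_last (n : ℕ) :
    (last n).castSucc.succAbove (last n) = last (n + 1) := by
  simp

theorem Fin.castSucc_last_succAbove_of_ne {n : ℕ} {c : Fin (n + 1)} (hc : c ≠ last n) :
    (last n).castSucc.succAbove c = c.castSucc :=
  succAbove_of_castSucc_lt _ _ (castSucc_lt_castSucc_iff.2 (lt_last_iff_ne_last.2 hc))

theorem LinearMap.eq_zero_of_map_col_eq_zero {R M n : Type*} [CommRing R] [AddCommGroup M]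
    [Module R M] [Fintype n] [DecidableEq n] {Q : Matrix n n R} (hQ : IsUnit Q.det)
    {φ : (n → R) →ₗ[R] M} (h : ∀ c, φ (Q.col c) = 0) : φ = 0 := by
  have hφQ : φ ∘ₗ Q.mulVecLin = 0 := LinearMap.pi_ext' fun c => LinearMap.ext_ring <| by
    simpa [Matrix.mulVec_single_one] using h c
  refine LinearMap.ext fun u => ?_
  simpa [Matrix.mulVec_mulVec, Matrix.mul_nonsing_inv _ hQ] using congr($hφQ (Q⁻¹.mulVec u))

namespace Matrix

theorem det_updateCol_last_single_last {R : Type*} [CommRing R] {n : ℕ}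
    (A : Matrix (Fin (n + 1)) (Fin (n + 1)) R) :
    (A.updateCol (last n) (Pi.single (last n) 1)).det = (A.submatrix castSucc castSucc).det := by
  rw [det_succ_column _ (last n), Fintype.sum_eq_single (last n) fun i hi => by simp [hi]]
  simp only [val_last, ← two_mul, pow_mul, even_two, Even.neg_pow, one_pow, updateCol_self,
    Pi.single_eq_same, mul_one, succAbove_last, one_mul]
  congr 1 with r c
  simp

theorem updateCol_submatrix {l m n o R : Type*} [DecidableEq o] (A : Matrix m n R)
    (f : l → m) {g g' : o → n} (j : o) (hg : ∀ c ≠ j, g c = g' c) :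
    (A.submatrix f g).updateCol j (fun r => A (f r) (g' j)) = A.submatrix f g' := by
  ext r c
  by_cases hc : c = j
  · simp [hc]
  · simp [hc, hg c hc]

section DesnanotJacobi
variable {K : Type*} [Field K] {n : ℕ} (A : Matrix (Fin (n + 2)) (Fin (n + 2)) K)

/-- The Desnanot–Jacobi identity for `A.updateCol (last (n + 1)) u` says that this linear form
vanishes at `u`; `(last n).castSucc.succAbove` deletes the index `n`, `castSucc` the index `n + 1`. -/
noncomputable def desnanotJacobiForm : (Fin (n + 2) → K) →ₗ[K] K :=
  (A.submatrix castSucc castSucc).det • (LinearMap.proj (last n) ∘ₗ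
      (A.submatrix (last n).castSucc.succAbove (last n).castSucc.succAbove).cramer ∘ₗ
      LinearMap.funLeft K K (last n).castSucc.succAbove) -
    (A.submatrix (last n).castSucc.succAbove castSucc).det • (LinearMap.proj (last n) ∘ₗ
      (A.submatrix castSucc (last n).castSucc.succAbove).cramer ∘ₗ
      LinearMap.funLeft K K castSucc) -
    (A.submatrix (castSucc ∘ castSucc) (castSucc ∘ castSucc)).det •
      (LinearMap.proj (last (n + 1)) ∘ₗ A.cramer)

theorem desnanotJacobiForm_apply (u : Fin (n + 2) → K) :
    A.desnanotJacobiForm u =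
      (A.submatrix castSucc castSucc).det *
          ((A.submatrix (last n).castSucc.succAbove (last n).castSucc.succAbove).updateCol
            (last n) fun r => u ((last n).castSucc.succAbove r)).det -
        (A.submatrix (last n).castSucc.succAbove castSucc).det *
          ((A.submatrix castSucc (last n).castSucc.succAbove).updateCol
            (last n) fun r => u r.castSucc).det -
        (A.submatrix (castSucc ∘ castSucc) (castSucc ∘ castSucc)).det *
          (A.updateCol (last (n + 1)) u).det := by
  simp [desnanotJacobiForm, cramer_apply, LinearMap.funLeft, Function.comp_def]

theorem desnanotJacobiForm_single_last :
    A.desnanotJacobiForm (Pi.single (last (n + 1)) 1) = 0 := by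
  set q := (last n).castSucc.succAbove
  have hq : (fun r => (Pi.single (last (n + 1)) 1 : Fin (n + 2) → K) (q r)) =
      Pi.single (last n) 1 := by
    ext r
    rw [← castSucc_last_succAbove_last n]
    simp only [Pi.single_apply, q, succAbove_right_inj]
  have hpq : ((A.submatrix castSucc q).updateCol (last n)
      fun r => (Pi.single (last (n + 1)) 1 : Fin (n + 2) → K) r.castSucc).det = 0 :=
    det_eq_zero_of_column_eq_zero (last n) fun r => by simp
  have hqq : (A.submatrix q q).submatrix castSucc castSucc =
      A.submatrix (castSucc ∘ castSucc) (castSucc ∘ castSucc) := by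
    ext r c
    simp [q, castSucc_last_succAbove_of_ne (castSucc_lt_last _).ne]
  rw [desnanotJacobiForm_apply, hq, hpq, det_updateCol_last_single_last, hqq,
    det_updateCol_last_single_last]
  ring

theorem desnanotJacobiForm_col_castSucc (c : Fin (n + 1)) :
    A.desnanotJacobiForm (fun r => A r c.castSucc) = 0 := by
  set q := (last n).castSucc.succAbove
  rw [desnanotJacobiForm_apply, det_updateCol_eq_zero (castSucc_lt_last c).ne]
  induction c using Fin.lastCases with
  | last =>
    rw [updateCol_submatrix A q (last n) fun _ => castSucc_last_succAbove_of_ne,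
      updateCol_submatrix A castSucc (last n) fun _ => castSucc_last_succAbove_of_ne]
    ring
  | cast c =>
    have hc : q c.castSucc = c.castSucc.castSucc :=
      castSucc_last_succAbove_of_ne (castSucc_lt_last c).ne
    have hqq : ((A.submatrix q q).updateCol (last n) fun r => A (q r) (q c.castSucc)).det = 0 :=
      det_updateCol_eq_zero (castSucc_lt_last c).ne
    have hpq : ((A.submatrix castSucc q).updateCol (last n)
        fun r => A r.castSucc (q c.castSucc)).det = 0 :=
      det_updateCol_eq_zero (castSucc_lt_last c).ne
    rw [← hc, hqq, hpq]
    ring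

theorem desnanotJacobiForm_eq_zero (h : (A.submatrix castSucc castSucc).det ≠ 0) :
    A.desnanotJacobiForm = 0 := by
  set Q := A.updateCol (last (n + 1)) (Pi.single (last (n + 1)) 1)
  have hQ : Q.det = (A.submatrix castSucc castSucc).det := det_updateCol_last_single_last A
  refine LinearMap.eq_zero_of_map_col_eq_zero (hQ ▸ h.isUnit) fun c => ?_
  induction c using Fin.lastCases with
  | last =>
    have hQc : Q.col (last (n + 1)) = Pi.single (last (n + 1)) 1 := by ext r; simp [Q]
    rw [hQc, desnanotJacobiForm_single_last]
  | cast c =>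
    have hQc : Q.col c.castSucc = fun r => A r c.castSucc := by
      ext r; simp [Q, (castSucc_lt_last c).ne]
    rw [hQc, desnanotJacobiForm_col_castSucc]

theorem desnanot_jacobi (h : (A.submatrix castSucc castSucc).det ≠ 0) :
    A.det * (A.submatrix (castSucc ∘ castSucc) (castSucc ∘ castSucc)).det =
      (A.submatrix castSucc castSucc).det *
          (A.submatrix (last n).castSucc.succAbove (last n).castSucc.succAbove).det -
        (A.submatrix castSucc (last n).castSucc.succAbove).det *
          (A.submatrix (last n).castSucc.succAbove castSucc).det := by
  have key := A.desnanotJacobiForm_apply fun r => A r (last (n + 1))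
  rw [A.desnanotJacobiForm_eq_zero h, ← castSucc_last_succAbove_last,
    updateCol_submatrix _ _ _ fun _ _ => rfl, updateCol_submatrix _ _ _ fun _ _ => rfl,
    castSucc_last_succAbove_last, updateCol_eq_self] at key
  simp only [LinearMap.zero_apply] at key
  linear_combination key

end DesnanotJacobi

end Matrix

section Wronskian

variable {I : Set ℝ} {x : ℝ}

/-- For `ρ r = r` this is the Wronskian matrix; other row orders `ρ` describe its derivative and
its minors. -/
noncomputable def wronskianMatrix (I : Set ℝ) {n : ℕ} (g : Fin n → ℝ → ℝ) (ρ : Fin n → ℕ)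
    (x : ℝ) : Matrix (Fin n) (Fin n) ℝ :=
  Matrix.of fun r c => iteratedDerivWithin (ρ r) (g c) I x

theorem wronskianMatrix_submatrix {m n : ℕ} (g : Fin n → ℝ → ℝ) (ρ : Fin n → ℕ)
    (rows cols : Fin m → Fin n) :
    (wronskianMatrix I g ρ x).submatrix rows cols = wronskianMatrix I (g ∘ cols) (ρ ∘ rows) x :=
  rfl

theorem analyticOn_wronskianOn {g : ℕ → ℝ → ℝ} {n : ℕ} (hI : UniqueDiffOn ℝ I)
    (hg : ∀ c < n, AnalyticOn ℝ (g c) I) : AnalyticOn ℝ (wronskianOn I g n) I :=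
  AnalyticOn.matrix_det fun r c => (hg c c.isLt).iteratedDerivWithin hI r

/-- The rows `(last m).castSucc.succAbove r` of the derivative are `0, …, m - 1, m + 1`. -/
theorem hasDerivWithinAt_wronskianOn {g : ℕ → ℝ → ℝ} {m : ℕ} (hI : UniqueDiffOn ℝ I)
    (hg : ∀ c < m + 1, AnalyticOn ℝ (g c) I) (hx : x ∈ I) :
    HasDerivWithinAt (wronskianOn I g (m + 1))
      (wronskianMatrix I (fun c : Fin (m + 1) => g c)
        (fun r => (last m).castSucc.succAbove r) x).det I x := by
  have hderiv := HasDerivWithinAt.matrix_det (s := I) (x := x)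
    (A := wronskianMatrix I (fun c : Fin (m + 1) => g c) (↑))
    (B := wronskianMatrix I (fun c : Fin (m + 1) => g c) (fun r => r + 1) x)
    fun r => hasDerivWithinAt_pi.2 fun c =>
      (hg c c.isLt).hasDerivWithinAt_iteratedDerivWithin hI r hx
  -- differentiating any row but the last one produces a repeated row
  rw [Fintype.sum_eq_single (last m) fun r hr => by
    obtain ⟨r, rfl⟩ := exists_castSucc_eq.2 hr
    exact Matrix.det_updateRow_eq_zero (i := r.succ) (castSucc_lt_succ (i := r)).ne'] at hderiv
  have hrow : (wronskianMatrix I (fun c : Fin (m + 1) => g c) (↑) x).updateRow (last m)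
      (wronskianMatrix I (fun c : Fin (m + 1) => g c) (fun r => r + 1) x (last m)) =
      wronskianMatrix I (fun c : Fin (m + 1) => g c)
        (fun r => (last m).castSucc.succAbove r) x := by
    ext r c
    induction r using Fin.lastCases with
    | last => simp [wronskianMatrix]
    | cast r =>
      simp [wronskianMatrix, castSucc_last_succAbove_of_ne (castSucc_lt_last r).ne]
  rw [hrow] at hderiv
  exact hderiv

theorem update_castSucc_last_succAbove {α : Type*} (f : ℕ → α) (a : α) {i : ℕ}
    (c : Fin (i + 1)) :
    update f (i + 1) a ((last i).castSucc.succAbove c) = update f i a c := by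
  induction c using Fin.lastCases with
  | last => simp
  | cast c =>
    rw [castSucc_last_succAbove_of_ne (castSucc_lt_last c).ne]
    simp [update_of_ne (Nat.ne_of_lt c.isLt), update_of_ne (Nat.ne_of_lt (Nat.lt_succ_of_lt c.isLt))]

theorem wronskianOn_mul_wronskianOn_update_succ {f : ℕ → ℝ → ℝ} {S : ℝ → ℝ} {i : ℕ}
    (h : wronskianOn I f (i + 1) x ≠ 0) :
    wronskianOn I f i x * wronskianOn I (update f (i + 1) S) (i + 2) x =
      wronskianOn I f (i + 1) x * (wronskianMatrix I (fun c : Fin (i + 1) => update f i S c)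
          (fun r => (last i).castSucc.succAbove r) x).det -
        wronskianOn I (update f i S) (i + 1) x * (wronskianMatrix I (fun c : Fin (i + 1) => f c)
          (fun r => (last i).castSucc.succAbove r) x).det := by
  set B := wronskianMatrix I (fun c : Fin (i + 2) => update f (i + 1) S c) (↑) x
  have hcs : (fun c : Fin (i + 2) => update f (i + 1) S c) ∘ castSucc
      = fun c : Fin (i + 1) => f c :=
    funext fun c => update_of_ne (by simp [c.isLt.ne]) _ _
  have hq : (fun c : Fin (i + 2) => update f (i + 1) S c) ∘ (last i).castSucc.succAbove
      = fun c : Fin (i + 1) => update f i S c :=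
    funext (update_castSucc_last_succAbove f S)
  have key := Matrix.desnanot_jacobi B (by rwa [wronskianMatrix_submatrix, hcs])
  simp only [B, wronskianMatrix_submatrix, ← Function.comp_assoc, hcs, hq] at key
  rw [mul_comm]
  exact key

end Wronskian

section Frobenius

variable {I : Set ℝ} {f : ℕ → ℝ → ℝ} {x : ℝ}

theorem wronskianOn_zero : wronskianOn I f 0 x = 1 :=
  Matrix.det_isEmpty

theorem AnalyticOn.update {g : ℕ → ℝ → ℝ} {S : ℝ → ℝ} {i : ℕ}
    (hg : ∀ c < i, AnalyticOn ℝ (g c) I) (hS : AnalyticOn ℝ S I) :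
    ∀ c < i + 1, AnalyticOn ℝ (update g i S c) I := by
  intro c hc
  rcases (Nat.lt_succ_iff.1 hc).lt_or_eq with hc | rfl
  · rw [update_of_ne hc.ne]
    exact hg c hc
  · rwa [update_self]

theorem wronskianOn_update_last_sum {m : ℕ} (hI : UniqueDiffOn ℝ I)
    (hf : ∀ i < m + 1, AnalyticOn ℝ (f i) I) (hx : x ∈ I) :
    wronskianOn I (update f m fun y => ∑ i ∈ Finset.range (m + 1), f i y) (m + 1) x =
      wronskianOn I f (m + 1) x := by
  set W := Matrix.of fun r c : Fin (m + 1) => iteratedDerivWithin r (f c) I x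
  suffices h : (Matrix.of fun r c : Fin (m + 1) =>
      iteratedDerivWithin r (update f m (fun y => ∑ i ∈ Finset.range (m + 1), f i y) c) I x) =
      W.updateCol (last m) fun r => ∑ c, (1 : ℝ) • W r c by
    rw [wronskianOn, h, Matrix.det_updateCol_sum, one_smul]
    rfl
  ext r c
  induction c using Fin.lastCases with
  | last =>
    simp only [val_last, update_self, Matrix.updateCol_self, one_smul, W, Matrix.of_apply]
    rw [iteratedDerivWithin_fun_sum hx hI fun i hi =>
      ((hf i (Finset.mem_range.1 hi)).contDiffOn hI).contDiffWithinAt hx,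
      Fin.sum_univ_eq_sum_range (fun c => iteratedDerivWithin r (f c) I x)]
  | cast c =>
    simp [W, (castSucc_lt_last c).ne, update_of_ne c.isLt.ne]

theorem analyticOn_frobR_zero {k : ℕ} (hf : ∀ i < k, AnalyticOn ℝ (f i) I) :
    AnalyticOn ℝ (frobR I f k 0) I :=
  Finset.analyticOn_fun_sum _ fun i hi => hf i (Finset.mem_range.1 hi)

theorem setOf_wronskianOn_ne_zero_mem_nhdsWithin {k : ℕ} (hI : UniqueDiffOn ℝ I)
    (hf : ∀ i < k, AnalyticOn ℝ (f i) I)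
    (hx : x ∈ {y ∈ I | ∀ j ∈ Icc 1 (k - 1), wronskianOn I f j y ≠ 0}) :
    {y ∈ I | ∀ j ∈ Icc 1 (k - 1), wronskianOn I f j y ≠ 0} ∈ 𝓝[I] x := by
  have : ∀ᶠ y in 𝓝[I] x, ∀ j ∈ Icc 1 (k - 1), wronskianOn I f j y ≠ 0 :=
    (eventually_all_finite (finite_Icc _ _)).2 fun j hj =>
      ((analyticOn_wronskianOn hI fun c hc => hf c (by grind)).continuousOn.continuousWithinAt
        hx.1).eventually_ne (hx.2 j hj)
  filter_upwards [self_mem_nhdsWithin, this] with y hy₁ hy₂ using ⟨hy₁, hy₂⟩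

theorem frobR_eqOn_wronskianOn_update {k : ℕ} (hI : UniqueDiffOn ℝ I)
    (hf : ∀ i < k, AnalyticOn ℝ (f i) I) {i : ℕ} (hi : i < k) :
    EqOn (frobR I f k i) (wronskianOn I (update f i (frobR I f k 0)) (i + 1))
      {x ∈ I | ∀ j ∈ Icc 1 (k - 1), wronskianOn I f j x ≠ 0} := by
  induction i with
  | zero =>
    intro x hx
    simp [frobR, wronskianOn, Matrix.det_unique]
  | succ i ih =>
    intro x hx
    have hW : wronskianOn I f (i + 1) x ≠ 0 := hx.2 (i + 1) ⟨by omega, by omega⟩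
    have hW₀ : wronskianOn I f i x ≠ 0 := by
      rcases i with _ | i
      · simp [wronskianOn_zero]
      · exact hx.2 (i + 1) ⟨by omega, by omega⟩
    have hderV := hasDerivWithinAt_wronskianOn hI
      (AnalyticOn.update (i := i) (fun c _ => hf c (by omega)) (analyticOn_frobR_zero hf)) hx.1
    have hderW := hasDerivWithinAt_wronskianOn (g := f) (m := i) hI
      (fun c _ => hf c (by omega)) hx.1
    have hquot := ((hderV.div hderW hW).congr_of_eventuallyEq
      (f₁ := fun y => frobR I f k i y / wronskianOn I f (i + 1) y)
      (eventually_of_mem (setOf_wronskianOn_ne_zero_mem_nhdsWithin hI hf hx) fun y hy => by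
        simp only [Pi.div_apply, ih (by omega) hy])
      (by simp only [Pi.div_apply, ih (by omega) hx])).derivWithin (hI x hx.1)
    have key := wronskianOn_mul_wronskianOn_update_succ (S := frobR I f k 0) hW
    simp only [frobR.eq_2]
    rw [hquot]
    field_simp
    linear_combination -key

end Frobenius

theorem stmt13_general (k : ℕ) (hk : 1 ≤ k) (I : Set ℝ) (hI : I.OrdConnected) (hI' : I.Nontrivial)
    (f : ℕ → ℝ → ℝ) (hf : ∀ i < k, AnalyticOn ℝ (f i) I)
    (J : Set ℝ) (hJI : J ⊆ I)
    (hW : ∀ j, 1 ≤ j → j ≤ k - 1 → ∀ x ∈ J, wronskianOn I f j x ≠ 0) :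
    (∀ i ≤ k - 1, AnalyticOn ℝ (frobR I f k i) J) ∧
      ∀ x ∈ J, frobR I f k (k - 1) x = wronskianOn I f k x := by
  obtain ⟨m, rfl⟩ : ∃ m, k = m + 1 := ⟨k - 1, by omega⟩
  have hU := hI.uniqueDiffOn hI'
  have hJU : J ⊆ {x ∈ I | ∀ j ∈ Icc 1 (m + 1 - 1), wronskianOn I f j x ≠ 0} :=
    fun x hx => ⟨hJI hx, fun j hj => hW j hj.1 hj.2 x hx⟩
  refine ⟨fun i hi => ?_, fun x hx => ?_⟩
  · have hV := analyticOn_wronskianOn hU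
      (AnalyticOn.update (i := i) (fun c _ => hf c (by omega)) (analyticOn_frobR_zero hf))
    exact (hV.mono hJI).congr ((frobR_eqOn_wronskianOn_update hU hf (by omega)).mono hJU)
  · rw [Nat.add_sub_cancel, frobR_eqOn_wronskianOn_update hU hf (by omega) (hJU hx)]
    exact wronskianOn_update_last_sum hU hf (hJI hx)

/-- Frobenius' lemma: if `f 0, …, f (k-1)` are analytic on the interval `I`, then on any
subinterval `J` of `I` on which the Wronskians `W_1, …, W_{k-1}` do not vanish, each `R_i`
(`0 ≤ i ≤ k-1`) is analytic (in particular well-defined), and `R_{k-1} = W_k` on `J`. -/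
theorem stmt13 (k : ℕ) (hk : 1 ≤ k) (I : Set ℝ) (hI : I.OrdConnected) (hI' : I.Nontrivial)
    (f : ℕ → ℝ → ℝ) (hf : ∀ i < k, AnalyticOn ℝ (f i) I)
    (J : Set ℝ) (hJI : J ⊆ I) (hJ : J.OrdConnected) (hJ' : J.Nontrivial)
    (hW : ∀ j, 1 ≤ j → j ≤ k - 1 → ∀ x ∈ J, wronskianOn I f j x ≠ 0) :
    (∀ i ≤ k - 1, AnalyticOn ℝ (frobR I f k i) J) ∧
      ∀ x ∈ J, frobR I f k (k - 1) x = wronskianOn I f k x :=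
  stmt13_general k hk I hI hI' f hf J hJI hW
end

section
/- Let f be a non-constant real polynomial and for integers p ≥ 1 and 0 ≤ i ≤ p define the polynomial h_{p,i} = (p!/(p−i)!) · (f′)^i · f^{p−i}. Then there exist rational functions F_{i,q} for 0 ≤ i ≤ q such that: (1) F_{q,q} = 1 for all q ≥ 0; (2) (f′)^q · F_{i,q} is a polynomial for all 0 ≤ i ≤ q; (3) for all q ≥ 0 and p ≥ 1, the q-th derivative of f^p equals Σ_{i=0}^{q} h_{p,i} · F_{i,q}. In particular the F_{i,q} do not depend on p. -/
open Polynomial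

/-!
Write `d_i = p!/(p-i)!`. Differentiating `d_i f^(p-i) G` gives
`d_{i+1} f^(p-i-1) f' G + d_i f^(p-i) G'`, because `d_{i+1} = (p-i) d_i`. Hence, by induction
on `q`, `(f^p)^{(q)} = Σ_i d_i f^(p-i) G_{i,q}` for polynomials `G_{i,q}` given by a recursion in
which `p` does not occur, with `G_{q,q} = (f')^q`. Since `f` is not constant, `f'` is invertible
among rational functions and `F_{i,q} = G_{i,q} / (f')^i` works.
-/

namespace Polynomial

variable {R : Type*} [CommSemiring R]

noncomputable def iterDerivPowCoeff (f : R[X]) : ℕ → ℕ → R[X]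
  | 0, 0 => 1
  | _ + 1, 0 => 0
  | 0, q + 1 => derivative (iterDerivPowCoeff f 0 q)
  | i + 1, q + 1 =>
    derivative (iterDerivPowCoeff f (i + 1) q) + derivative f * iterDerivPowCoeff f i q

variable (f : R[X])

lemma iterDerivPowCoeff_eq_zero_of_lt : ∀ {q i : ℕ}, q < i → iterDerivPowCoeff f i q = 0
  | 0, _ + 1, _ => rfl
  | q + 1, i + 1, h => by
    rw [iterDerivPowCoeff, iterDerivPowCoeff_eq_zero_of_lt (by omega),
      iterDerivPowCoeff_eq_zero_of_lt (by omega), derivative_zero, mul_zero, add_zero]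

lemma iterDerivPowCoeff_self : ∀ q : ℕ, iterDerivPowCoeff f q q = derivative f ^ q
  | 0 => rfl
  | q + 1 => by
    rw [iterDerivPowCoeff, iterDerivPowCoeff_eq_zero_of_lt f (Nat.lt_succ_self q),
      iterDerivPowCoeff_self q, derivative_zero, zero_add, pow_succ']

lemma derivative_C_descFactorial_mul_pow (p i : ℕ) :
    derivative (C (p.descFactorial i : R) * f ^ (p - i)) =
      C (p.descFactorial (i + 1) : R) * f ^ (p - (i + 1)) * derivative f := by
  rw [derivative_C_mul, derivative_pow, Nat.descFactorial_succ, Nat.cast_mul, C_mul,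
    Nat.sub_sub]
  ring

theorem iterate_derivative_pow (q p : ℕ) :
    derivative^[q] (f ^ p) =
      ∑ i ∈ Finset.range (q + 1),
        C (p.descFactorial i : R) * f ^ (p - i) * iterDerivPowCoeff f i q := by
  induction q with
  | zero => simp [iterDerivPowCoeff]
  | succ q ih =>
    set c : ℕ → R[X] := fun i => C (p.descFactorial i : R) * f ^ (p - i)
    have hc : ∀ i, derivative (c i) = c (i + 1) * derivative f :=
      derivative_C_descFactorial_mul_pow f p
    have hterm : ∀ i, derivative (c i * iterDerivPowCoeff f i q) =
        c i * derivative (iterDerivPowCoeff f i q) +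
          c (i + 1) * (derivative f * iterDerivPowCoeff f i q) := fun i => by
      rw [derivative_mul, hc]; ring
    calc derivative^[q + 1] (f ^ p)
        = ∑ i ∈ Finset.range (q + 1), derivative (c i * iterDerivPowCoeff f i q) := by
          rw [Function.iterate_succ_apply', ih, derivative_sum]
      _ = ∑ i ∈ Finset.range (q + 2), c i * derivative (iterDerivPowCoeff f i q) +
            ∑ i ∈ Finset.range (q + 1),
              c (i + 1) * (derivative f * iterDerivPowCoeff f i q) := by
          rw [Finset.sum_range_succ _ (q + 1),
            iterDerivPowCoeff_eq_zero_of_lt f (Nat.lt_succ_self q), derivative_zero,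
            mul_zero, add_zero, ← Finset.sum_add_distrib]
          exact Finset.sum_congr rfl fun i _ => hterm i
      _ = ∑ i ∈ Finset.range (q + 2), c i * iterDerivPowCoeff f i (q + 1) := by
          rw [Finset.sum_range_succ', Finset.sum_range_succ' _ (q + 1), add_right_comm,
            ← Finset.sum_add_distrib]
          simp only [iterDerivPowCoeff, mul_add]

end Polynomial

/-- For a non-constant real polynomial `f`, setting
`h_{p,i} = (p!/(p-i)!) (f')^i f^(p-i)`, there exist rational functions `F_{i,q}`
(independent of `p`) such that (1) `F_{q,q} = 1`, (2) `(f')^q · F_{i,q}` is a polynomial,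
and (3) `(f^p)^{(q)} = Σ_{i=0}^q h_{p,i} F_{i,q}` for all `q ≥ 0` and `p ≥ 1`. -/
theorem stmt14 (f : Polynomial ℝ) (hf : 0 < f.natDegree) :
    ∃ F : ℕ → ℕ → RatFunc ℝ,
      (∀ q, F q q = 1) ∧
      (∀ q i, i ≤ q →
        ∃ g : Polynomial ℝ,
          algebraMap (Polynomial ℝ) (RatFunc ℝ) ((Polynomial.derivative f) ^ q) * F i q =
            algebraMap (Polynomial ℝ) (RatFunc ℝ) g) ∧
      (∀ q p, 1 ≤ p →
        algebraMap (Polynomial ℝ) (RatFunc ℝ)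
            ((fun g => Polynomial.derivative g)^[q] (f ^ p)) =
          ∑ i ∈ Finset.range (q + 1),
            algebraMap (Polynomial ℝ) (RatFunc ℝ)
                (Polynomial.C ((p.descFactorial i : ℝ)) *
                  (Polynomial.derivative f) ^ i * f ^ (p - i)) *
              F i q) := by
  set A := algebraMap ℝ[X] (RatFunc ℝ)
  have hf' : A (derivative f) ≠ 0 := by
    rw [map_ne_zero_iff A (RatFunc.algebraMap_injective ℝ)]
    exact fun h => hf.ne' (derivative_eq_zero.mp h)
  refine ⟨fun i q => A (iterDerivPowCoeff f i q) / A (derivative f) ^ i, fun q => ?_,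
    fun q i hiq => ⟨derivative f ^ (q - i) * iterDerivPowCoeff f i q, ?_⟩, fun q p _ => ?_⟩
  · beta_reduce
    rw [iterDerivPowCoeff_self, map_pow, div_self (pow_ne_zero _ hf')]
  · rw [← Nat.sub_add_cancel hiq, pow_add, Nat.add_sub_cancel]
    simp only [map_mul, map_pow]
    field_simp
  · rw [iterate_derivative_pow, map_sum]
    refine Finset.sum_congr rfl fun i _ => ?_
    simp only [map_mul, map_pow]
    field_simp
end

section
/- Let f be a non-constant real analytic function on a real interval I, let k ≥ 1, and let α_1, …, α_k be pairwise distinct natural numbers. Then {x ∈ I : there exists s with 1 ≤ s ≤ k such that W(f^{α_1+k}, …, f^{α_s+k})(x) = 0} ⊆ {x ∈ I : f(x)·f′(x) = 0}. -/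
/-!
Differentiating `f ^ a` repeatedly gives
`(f ^ a)⁽ʳ⁾ = ∑_{m ≤ r} c_{r,m} · a(a-1)⋯(a-m+1) · f ^ (a - m)` with coefficients `c_{r,m}`
independent of `a` and `c_{r,r} = (f')ʳ`. Hence the Wronskian matrix of `f ^ a₁, …, f ^ aₛ`
is the product of a lower triangular matrix with diagonal `(f')ʳ` and the matrix
`(aⱼ.descFactorial m · f ^ (aⱼ - m))`, the Wronskian matrix of the monomials `tᵃʲ` at `t = f`.
Pulling out powers of `f` leaves a Vandermonde determinant in the distinct exponents `aⱼ`, so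
the Wronskian vanishes only where `f · f' = 0`.
-/

open Finset Matrix Set
open scoped ContDiff

section IteratedDerivPow

variable {𝕜 : Type*} [NontriviallyNormedField 𝕜] {s : Set 𝕜} {f g : 𝕜 → 𝕜} {f' g' x : 𝕜}

theorem HasDerivWithinAt.mul_descFactorial_mul_pow (hg : HasDerivWithinAt g g' s x)
    (hf : HasDerivWithinAt f f' s x) (a m : ℕ) :
    HasDerivWithinAt (fun y => g y * a.descFactorial m * f y ^ (a - m))
      (g' * a.descFactorial m * f x ^ (a - m) +
        g x * f' * a.descFactorial (m + 1) * f x ^ (a - (m + 1))) s x := by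
  refine ((hg.mul_const _).fun_mul (hf.fun_pow (a - m))).congr_deriv ?_
  rw [Nat.descFactorial_succ, Nat.sub_sub, Nat.cast_mul]
  ring

theorem exists_iteratedDerivWithin_pow_eq_sum (hs : UniqueDiffOn 𝕜 s) (hf : ContDiffOn 𝕜 ∞ f s)
    (r : ℕ) :
    ∃ c : ℕ → 𝕜 → 𝕜, (∀ m, ContDiffOn 𝕜 ∞ (c m) s) ∧ (∀ m, r < m → EqOn (c m) 0 s) ∧
      EqOn (c r) (fun x => derivWithin f s x ^ r) s ∧
      ∀ a : ℕ, EqOn (iteratedDerivWithin r (fun y => f y ^ a) s)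
        (fun x => ∑ m ∈ range (r + 1), c m x * a.descFactorial m * f x ^ (a - m)) s := by
  induction r with
  | zero =>
    refine ⟨fun m _ => if m = 0 then 1 else 0, fun m => contDiffOn_const, ?_, ?_, ?_⟩
    · intro m hm x _
      simp [hm.ne']
    · intro x _
      simp
    · intro a x _
      simp
  | succ r ih =>
    obtain ⟨c, hc_smooth, hc_zero, hc_diag, hc_sum⟩ := ih
    have hf' : ContDiffOn 𝕜 ∞ (derivWithin f s) s := hf.derivWithin hs le_rfl
    have hc'_zero : ∀ m, r < m → EqOn (derivWithin (c m) s) 0 s := fun m hm x hx => by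
      rw [derivWithin_congr (hc_zero m hm) (hc_zero m hm hx)]
      exact (hasDerivWithinAt_const x s 0).derivWithin (hs x hx)
    let d : ℕ → 𝕜 → 𝕜 := fun m x =>
      derivWithin (c m) s x + if m = 0 then 0 else c (m - 1) x * derivWithin f s x
    refine ⟨d, fun m => ?_, fun m hm x hx => ?_, fun x hx => ?_, fun a x hx => ?_⟩
    · rcases m with _ | m
      · simpa [d] using (hc_smooth 0).derivWithin hs le_rfl
      · simpa [d] using ((hc_smooth _).derivWithin hs le_rfl).add ((hc_smooth m).mul hf')
    · obtain ⟨m, rfl⟩ : ∃ m', m = m' + 1 := ⟨m - 1, by omega⟩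
      simp [d, hc'_zero (m + 1) (by omega) hx, hc_zero m (by omega) hx]
    · simp [d, hc'_zero (r + 1) r.lt_succ_self hx, hc_diag hx, pow_succ]
    · have hterm : ∀ m ∈ range (r + 1), HasDerivWithinAt
          (fun y => c m y * a.descFactorial m * f y ^ (a - m))
          (derivWithin (c m) s x * a.descFactorial m * f x ^ (a - m) + c m x *
            derivWithin f s x * a.descFactorial (m + 1) * f x ^ (a - (m + 1))) s x :=
        fun m _ => ((hc_smooth m).differentiableOn (by simp) x hx).hasDerivWithinAt
          |>.mul_descFactorial_mul_pow ((hf.differentiableOn (by simp) x hx).hasDerivWithinAt) a m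
      rw [iteratedDerivWithin_succ, derivWithin_congr (hc_sum a) (hc_sum a hx),
        (HasDerivWithinAt.fun_sum hterm).derivWithin (hs x hx), sum_add_distrib]
      simp only [d, add_mul, sum_add_distrib]
      rw [sum_range_succ _ (r + 1), hc'_zero (r + 1) r.lt_succ_self hx, sum_range_succ' _ (r + 1)]
      simp [mul_right_comm _ (derivWithin f s x)]

theorem det_iteratedDerivWithin_pow (hs : UniqueDiffOn 𝕜 s) (hf : ContDiffOn 𝕜 ∞ f s)
    {n : ℕ} (a : Fin n → ℕ) (hx : x ∈ s) :
    (of fun r c : Fin n => iteratedDerivWithin r (fun y => f y ^ a c) s x).det =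
      (∏ r : Fin n, derivWithin f s x ^ (r : ℕ)) *
        (of fun m c : Fin n => ((a c).descFactorial m : 𝕜) * f x ^ (a c - m)).det := by
  choose C _ hC_zero hC_diag hC_sum using exists_iteratedDerivWithin_pow_eq_sum hs hf
  let L : Matrix (Fin n) (Fin n) 𝕜 := of fun r m => C r m x
  have hL : L.IsLowerTriangular := fun r m hrm => hC_zero r m hrm hx
  have hLV : (of fun r c : Fin n => iteratedDerivWithin r (fun y => f y ^ a c) s x) =
      L * of fun m c : Fin n => ((a c).descFactorial m : 𝕜) * f x ^ (a c - m) := by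
    ext r c
    rw [of_apply, hC_sum r (a c) hx, mul_apply]
    simp only [L, of_apply, ← mul_assoc]
    rw [Fin.sum_univ_eq_sum_range (fun m => C r m x * (a c).descFactorial m * f x ^ (a c - m))]
    refine sum_subset (range_subset_range.2 r.is_lt) fun m _ hm => ?_
    rw [hC_zero r m (by simpa using hm) hx, Pi.zero_apply, zero_mul, zero_mul]
  rw [hLV, det_mul, det_of_isLowerTriangular L hL]
  simp only [L, of_apply, hC_diag _ hx]

end IteratedDerivPow

theorem det_descFactorial_eq_det_vandermonde {R : Type*} [CommRing R] [IsDomain R] {n : ℕ}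
    (a : Fin n → ℕ) :
    (of fun m c : Fin n => ((a c).descFactorial m : R)).det =
      (vandermonde fun c => (a c : R)).det := by
  rw [det_eval_matrixOfPolynomials_eq_det_vandermonde _ (fun m => descPochhammer R m)
    (fun m => descPochhammer_natDegree R m) (fun m => monic_descPochhammer R m), ← det_transpose]
  simp [transpose, descPochhammer_eval_eq_descFactorial]

theorem det_descFactorial_mul_pow_ne_zero {K : Type*} [Field K] [CharZero K] {n : ℕ}
    {a : Fin n → ℕ} (ha : Function.Injective a) {y : K} (hy : y ≠ 0) :
    (of fun m c : Fin n => ((a c).descFactorial m : K) * y ^ (a c - m)).det ≠ 0 := by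
  have hfactor : (of fun m c : Fin n => ((a c).descFactorial m : K) * y ^ (a c - m)) =
      of fun m c : Fin n => (y ^ (m : ℕ))⁻¹ *
        of (fun m c => y ^ a c * of (fun m c : Fin n => ((a c).descFactorial m : K)) m c) m c := by
    ext m c
    simp only [of_apply]
    rcases le_or_gt (m : ℕ) (a c) with hm | hm
    · rw [pow_sub₀ _ hy hm]
      ring
    -- here the truncated exponent `a c - m` is harmless: the coefficient vanishes
    · simp [Nat.descFactorial_eq_zero_iff_lt.2 hm]
  rw [hfactor, det_mul_column, det_mul_row, det_descFactorial_eq_det_vandermonde]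
  refine mul_ne_zero (prod_ne_zero_iff.2 fun m _ => by simp [hy]) <|
    mul_ne_zero (prod_ne_zero_iff.2 fun c _ => pow_ne_zero _ hy) ?_
  exact det_vandermonde_ne_zero_iff.2 (Nat.cast_injective.comp ha)

theorem stmt15_general (k : ℕ) (I : Set ℝ) (hI : I.OrdConnected) (hI' : I.Nontrivial)
    (f : ℝ → ℝ) (hf : AnalyticOn ℝ f I)
    (α : ℕ → ℕ) (hα : ∀ i < k, ∀ j < k, α i = α j → i = j) :
    {x ∈ I | ∃ s, 1 ≤ s ∧ s ≤ k ∧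
        wronskianOn I (fun i y => f y ^ (α i + k)) s x = 0} ⊆
      {x ∈ I | f x * derivWithin f I x = 0} := by
  rintro x ⟨hx, s, -, hsk, hW⟩
  refine ⟨hx, by_contra fun hne => ?_⟩
  obtain ⟨hfx, hf'x⟩ := mul_ne_zero_iff.1 hne
  have hI_diff : UniqueDiffOn ℝ I :=
    uniqueDiffOn_convex hI.convex (hI.convex.nontrivial_iff_nonempty_interior.1 hI')
  have hα_inj : Function.Injective fun c : Fin s => α c + k := fun i j hij =>
    Fin.ext (hα i (by omega) j (by omega) (by simpa using hij))
  rw [wronskianOn, det_iteratedDerivWithin_pow hI_diff (hf.contDiffOn hI_diff) _ hx] at hW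
  exact mul_ne_zero (prod_ne_zero_iff.2 fun r _ => pow_ne_zero _ hf'x)
    (det_descFactorial_mul_pow_ne_zero hα_inj hfx) hW

/-- If `f` is a non-constant analytic function on an interval `I` and `α_1, …, α_k` are
pairwise distinct natural numbers (`k ≥ 1`), then every zero in `I` of one of the
Wronskians `W(f^{α_1+k}, …, f^{α_s+k})`, `1 ≤ s ≤ k`, is a zero of `f·f′`. -/
theorem stmt15 (k : ℕ) (hk : 1 ≤ k) (I : Set ℝ) (hI : I.OrdConnected) (hI' : I.Nontrivial)
    (f : ℝ → ℝ) (hf : AnalyticOn ℝ f I)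
    (hnc : ∃ x ∈ I, ∃ y ∈ I, f x ≠ f y)
    (α : ℕ → ℕ) (hα : ∀ i < k, ∀ j < k, α i = α j → i = j) :
    {x ∈ I | ∃ s, 1 ≤ s ∧ s ≤ k ∧
        wronskianOn I (fun i y => f y ^ (α i + k)) s x = 0} ⊆
      {x ∈ I | f x * derivWithin f I x = 0} :=
  stmt15_general k I hI hI' f hf α hα
end

section
/- Let f be a non-constant real analytic function on a real interval I, let k ≥ 2, and let α_1, …, α_k be pairwise distinct natural numbers. Then {x ∈ I : there exists s with 1 ≤ s ≤ k such that W(f^{α_1+k}, …, f^{α_s+k})(x) = 0} = {x ∈ I : f(x)·f′(x) = 0}. -/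
/-!
At a point where `f` and `f'` do not vanish, Faà di Bruno's formula factors the matrix of
derivatives of `g_c ∘ f` as `B · D`, where `B` (the partial Bell polynomials in the derivatives
of `f`) is lower triangular with diagonal `1, f', f'², …`, and `D_{m,c} = g_c^{(m)}(f)`. For
`g_c = y ^ n_c`, rescaling the rows and columns of `D` leaves the matrix of descending factorials
`n_c (n_c - 1) ⋯ (n_c - m + 1)`, which has the Vandermonde determinant of the distinct `n_c`.
Conversely, the `1 × 1` Wronskian is `f ^ n` and the `2 × 2` one carries the factor `f'`.
-/

open Finset Matrix
open scoped ContDiff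

section Bell

variable {𝕜 : Type*} [NontriviallyNormedField 𝕜] {I : Set 𝕜} {f : 𝕜 → 𝕜}

variable (I f) in
/-- `bellWithin I f r m` is the partial Bell polynomial `B_{r,m}(f', f'', …)`, with derivatives
taken within `I`, computed through the recursion `B_{r+1,m} = B_{r,m}' + B_{r,m-1} f'`. -/
noncomputable def bellWithin : ℕ → ℕ → 𝕜 → 𝕜
  | 0, 0 => fun _ => 1
  | 0, _ + 1 => fun _ => 0
  | r + 1, 0 => derivWithin (bellWithin r 0) I
  | r + 1, m + 1 => fun y =>
      derivWithin (bellWithin r (m + 1)) I y + bellWithin r m y * derivWithin f I y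

theorem eqOn_bellWithin_zero_of_lt {r m : ℕ} (h : r < m) :
    Set.EqOn (bellWithin I f r m) 0 I := by
  induction r generalizing m with
  | zero => obtain ⟨m, rfl⟩ := Nat.exists_eq_add_of_lt h; exact fun _ _ => rfl
  | succ r ih =>
    obtain ⟨m, rfl⟩ : ∃ m', m = m' + 1 := ⟨m - 1, by omega⟩
    intro y hy
    have hderiv : derivWithin (bellWithin I f r (m + 1)) I y = 0 := by
      rw [derivWithin_congr (ih (by omega)) (ih (by omega) hy), derivWithin_zero, Pi.zero_apply]
    simp [bellWithin, hderiv, ih (by omega : r < m) hy]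

theorem derivWithin_bellWithin_of_lt {r m : ℕ} (h : r < m) {y : 𝕜} (hy : y ∈ I) :
    derivWithin (bellWithin I f r m) I y = 0 := by
  rw [derivWithin_congr (eqOn_bellWithin_zero_of_lt h) (eqOn_bellWithin_zero_of_lt h hy),
    derivWithin_zero, Pi.zero_apply]

theorem bellWithin_self (r : ℕ) {y : 𝕜} (hy : y ∈ I) :
    bellWithin I f r r y = derivWithin f I y ^ r := by
  induction r with
  | zero => simp [bellWithin]
  | succ r ih =>
    simp only [bellWithin, derivWithin_bellWithin_of_lt (Nat.lt_succ_self r) hy, ih, zero_add,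
      pow_succ]

theorem contDiffOn_bellWithin (hI : UniqueDiffOn 𝕜 I) (hf : ContDiffOn 𝕜 ∞ f I) (r m : ℕ) :
    ContDiffOn 𝕜 ∞ (bellWithin I f r m) I := by
  have hf' : ContDiffOn 𝕜 ∞ (derivWithin f I) I := hf.derivWithin hI (by simp)
  induction r generalizing m with
  | zero => cases m <;> exact contDiffOn_const
  | succ r ih =>
    cases m with
    | zero => exact (ih 0).derivWithin hI (by simp)
    | succ m => exact ((ih (m + 1)).derivWithin hI (by simp)).add ((ih m).mul hf')

theorem iteratedDerivWithin_comp_eq_sum_bellWithin (hI : UniqueDiffOn 𝕜 I)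
    (hf : ContDiffOn 𝕜 ∞ f I) {g : 𝕜 → 𝕜} (hg : ContDiff 𝕜 ∞ g) (r : ℕ) {y : 𝕜} (hy : y ∈ I) :
    iteratedDerivWithin r (g ∘ f) I y =
      ∑ m ∈ range (r + 1), bellWithin I f r m y * iteratedDeriv m g (f y) := by
  induction r generalizing y with
  | zero => simp [bellWithin]
  | succ r ih =>
    have hterm : ∀ m ∈ range (r + 1), HasDerivWithinAt
        (fun z => bellWithin I f r m z * iteratedDeriv m g (f z))
        (derivWithin (bellWithin I f r m) I y * iteratedDeriv m g (f y) +
          bellWithin I f r m y * (iteratedDeriv (m + 1) g (f y) * derivWithin f I y)) I y := by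
      intro m _
      have hB := ((contDiffOn_bellWithin hI hf r m).differentiableOn (by simp) y hy)
      have hg' : HasDerivAt (iteratedDeriv m g) (iteratedDeriv (m + 1) g (f y)) (f y) := by
        rw [iteratedDeriv_succ]
        exact (hg.differentiable_iteratedDeriv m (mod_cast ENat.natCast_lt_top m) _).hasDerivAt
      exact hB.hasDerivWithinAt.mul
        (hg'.comp_hasDerivWithinAt y (hf.differentiableOn (by simp) y hy).hasDerivWithinAt)
    rw [iteratedDerivWithin_succ, derivWithin_congr (fun z hz => ih hz) (ih hy),
      (HasDerivWithinAt.fun_sum hterm).derivWithin (hI y hy), sum_range_succ' _ (r + 1)]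
    simp only [bellWithin, add_mul, sum_add_distrib]
    -- the extra top term `B_{r,r+1}'` vanishes
    rw [sum_range_succ (fun m => derivWithin (bellWithin I f r (m + 1)) I y * _) r,
      derivWithin_bellWithin_of_lt (Nat.lt_succ_self r) hy,
      sum_range_succ' (fun m => derivWithin (bellWithin I f r m) I y * _) r]
    simp only [zero_mul, add_zero, mul_assoc, mul_comm (derivWithin f I y)]
    abel

end Bell

theorem wronskianOn_comp {I : Set ℝ} (hI : UniqueDiffOn ℝ I) {f : ℝ → ℝ}
    (hf : ContDiffOn ℝ ∞ f I)
    {g : ℕ → ℝ → ℝ} (hg : ∀ i, ContDiff ℝ ∞ (g i)) (s : ℕ) {x : ℝ} (hx : x ∈ I) :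
    wronskianOn I (fun i => g i ∘ f) s x =
      derivWithin f I x ^ (∑ r : Fin s, (r : ℕ)) *
        (of fun m c : Fin s => iteratedDeriv m (g c) (f x)).det := by
  let B : Matrix (Fin s) (Fin s) ℝ := of fun r m => bellWithin I f r m x
  have hfactor : (of fun r c : Fin s => iteratedDerivWithin r (g c ∘ f) I x) =
      B * of fun m c : Fin s => iteratedDeriv m (g c) (f x) := by
    ext r c
    simp only [of_apply, mul_apply, B]
    rw [iteratedDerivWithin_comp_eq_sum_bellWithin hI hf (hg c) r hx,
      Fin.sum_univ_eq_sum_range (fun m => bellWithin I f r m x * iteratedDeriv m (g c) (f x)),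
      sum_subset (range_subset_range.mpr r.isLt) fun m _ hm => by
        rw [eqOn_bellWithin_zero_of_lt (by simpa using hm) hx, Pi.zero_apply, zero_mul]]
  have hB : B.det = derivWithin f I x ^ (∑ r : Fin s, (r : ℕ)) := by
    rw [det_of_isLowerTriangular B fun r m h => eqOn_bellWithin_zero_of_lt h hx,
      ← prod_pow_eq_pow_sum]
    exact prod_congr rfl fun r _ => bellWithin_self r hx
  rw [wronskianOn, hfactor, det_mul, hB]

theorem descFactorial_mul_pow_sub {K : Type*} [Field K] {y : K} (hy : y ≠ 0) (n m : ℕ) :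
    (n.descFactorial m : K) * y ^ (n - m) =
      y⁻¹ ^ m * (y ^ n * (descPochhammer K m).eval (n : K)) := by
  rw [descPochhammer_eval_eq_descFactorial]
  rcases le_or_gt m n with h | h
  · rw [pow_sub₀ y hy h, inv_pow]
    ring
  · simp [Nat.descFactorial_eq_zero_iff_lt.mpr h]

theorem det_iteratedDeriv_pow_ne_zero {𝕜 : Type*} [NontriviallyNormedField 𝕜] [CharZero 𝕜]
    {s : ℕ} {n : Fin s → ℕ} (hn : Function.Injective n) {y : 𝕜} (hy : y ≠ 0) :
    (of fun m c : Fin s => iteratedDeriv m (· ^ n c) y).det ≠ 0 := by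
  have hfactor : (of fun m c : Fin s => iteratedDeriv m (· ^ n c) y) =
      diagonal (fun m : Fin s => y⁻¹ ^ (m : ℕ)) *
        (of fun c m : Fin s => (descPochhammer 𝕜 m).eval (n c : 𝕜))ᵀ *
          diagonal (fun c => y ^ n c) := by
    ext m c
    simp only [of_apply, iteratedDeriv_pow, descFactorial_mul_pow_sub hy, diagonal_mul,
      mul_diagonal, transpose_apply]
    ring
  rw [hfactor, det_mul, det_mul, det_diagonal, det_diagonal, det_transpose,
    ← det_eval_matrixOfPolynomials_eq_det_vandermonde _ _ (fun m => descPochhammer_natDegree 𝕜 m)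
      (fun m => monic_descPochhammer 𝕜 m)]
  refine mul_ne_zero (mul_ne_zero ?_ ?_) ?_
  · exact prod_ne_zero_iff.2 fun m _ => pow_ne_zero _ (inv_ne_zero hy)
  · exact det_vandermonde_ne_zero_iff.2 (Nat.cast_injective.comp hn)
  · exact prod_ne_zero_iff.2 fun c _ => pow_ne_zero _ hy

theorem stmt16_general (k : ℕ) (hk : 2 ≤ k) (I : Set ℝ) (hI : I.OrdConnected) (hI' : I.Nontrivial)
    (f : ℝ → ℝ) (hf : AnalyticOn ℝ f I)
    (α : ℕ → ℕ) (hα : ∀ i < k, ∀ j < k, α i = α j → i = j) :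
    {x ∈ I | ∃ s, 1 ≤ s ∧ s ≤ k ∧
        wronskianOn I (fun i y => f y ^ (α i + k)) s x = 0} =
      {x ∈ I | f x * derivWithin f I x = 0} := by
  have hU : UniqueDiffOn ℝ I :=
    uniqueDiffOn_convex hI.convex (hI.convex.nontrivial_iff_nonempty_interior.1 hI')
  have hW : ∀ s, ∀ x ∈ I, wronskianOn I (fun i y => f y ^ (α i + k)) s x =
      derivWithin f I x ^ (∑ r : Fin s, (r : ℕ)) *
        (of fun m c : Fin s => iteratedDeriv m (· ^ (α c + k)) (f x)).det :=
    fun s x hx => wronskianOn_comp hU (hf.contDiffOn hU) (fun i => contDiff_id.pow _) s hx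
  ext x
  simp only [Set.mem_ofPred_eq, and_congr_right_iff]
  intro hx
  constructor
  · rintro ⟨s, -, hsk, hs⟩
    by_contra h
    obtain ⟨hf0, hf'0⟩ := mul_ne_zero_iff.mp h
    refine mul_ne_zero (pow_ne_zero _ hf'0) (det_iteratedDeriv_pow_ne_zero ?_ hf0)
      (hW s x hx ▸ hs)
    intro i j hij
    exact Fin.ext (hα i (by omega) j (by omega) (by simpa using hij))
  · intro h
    rcases mul_eq_zero.mp h with hf0 | hf'0
    · refine ⟨1, le_rfl, by omega, ?_⟩
      simp [hW 1 x hx, hf0, show k ≠ 0 by omega]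
    · refine ⟨2, one_le_two, hk, ?_⟩
      simp [hW 2 x hx, hf'0]

/-- If `f` is a non-constant analytic function on an interval `I` and `α_1, …, α_k` are
pairwise distinct natural numbers with `k ≥ 2`, then the set of zeros in `I` of the
Wronskians `W(f^{α_1+k}, …, f^{α_s+k})`, `1 ≤ s ≤ k`, is exactly the zero set of `f·f′`
in `I`. -/
theorem stmt16 (k : ℕ) (hk : 2 ≤ k) (I : Set ℝ) (hI : I.OrdConnected) (hI' : I.Nontrivial)
    (f : ℝ → ℝ) (hf : AnalyticOn ℝ f I)
    (hnc : ∃ x ∈ I, ∃ y ∈ I, f x ≠ f y)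
    (α : ℕ → ℕ) (hα : ∀ i < k, ∀ j < k, α i = α j → i = j) :
    {x ∈ I | ∃ s, 1 ≤ s ∧ s ≤ k ∧
        wronskianOn I (fun i y => f y ^ (α i + k)) s x = 0} =
      {x ∈ I | f x * derivWithin f I x = 0} :=
  stmt16_general k hk I hI hI' f hf α hα
end

section
/- For every integer k ≥ 2 and every natural number p, there exist a non-constant real polynomial f, positive integers α_1, …, α_k, and real constants a_1, …, a_k such that, setting g = Σ_{i=1}^k a_i · f^{α_i} and Υ = {x ∈ ℝ : there exists i ≤ k with W(f^{α_1}, …, f^{α_i})(x) = 0}, the set Υ is finite with |Υ| ≥ p, and the number of distinct real zeros of g satisfies Z_ℝ(g) ≥ (1 + |Υ|)·(k − 1) + Z_ℝ(f). -/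
/-!
Take `f = T₂ₙ + 2` with `T₂ₙ` the Chebyshev polynomial (so `f ≥ 1` everywhere) and `αᵢ = i`.
By Faà di Bruno's formula the Wronskian matrix of `f, f², …, fˢ` is a lower triangular matrix
with diagonal `1, f', …, f'^(s-1)` times the Wronskian matrix of `X, X², …, Xˢ` composed with `f`,
whose determinant is a nonzero constant times `fˢ`. Hence `Υ` is the zero set of
`f' = 2n U₂ₙ₋₁`, of size `2n - 1`. With `Q = X · T_{k-1}(X - 2)` the combination
`g = Q ∘ f = f · T_{2n(k-1)}` has exactly `2n(k - 1)` real zeros.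
-/

open Polynomial

/-- The Wronskian (over all of `ℝ`) of the first `j` functions of the family `f`. -/
noncomputable def wronskianR (f : ℕ → ℝ → ℝ) (j : ℕ) (x : ℝ) : ℝ :=
  (Matrix.of fun r c : Fin j => iteratedDeriv (r : ℕ) (f (c : ℕ)) x).det

namespace Polynomial

variable {R : Type*}

section CommSemiring

variable [CommSemiring R]

noncomputable def faaDiBrunoCoeff (f : R[X]) : ℕ → ℕ → R[X]
  | 0, 0 => 1
  | 0, _ + 1 => 0
  | r + 1, 0 => derivative (faaDiBrunoCoeff f r 0)
  | r + 1, m + 1 => derivative (faaDiBrunoCoeff f r (m + 1)) + faaDiBrunoCoeff f r m * derivative f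

theorem faaDiBrunoCoeff_eq_zero_of_lt (f : R[X]) {r m : ℕ} (h : r < m) :
    faaDiBrunoCoeff f r m = 0 := by
  induction r generalizing m with
  | zero => obtain ⟨m, rfl⟩ := Nat.exists_eq_add_one.mpr h; rfl
  | succ r ih =>
    obtain ⟨m, rfl⟩ := Nat.exists_eq_add_one.mpr (Nat.zero_lt_of_lt h)
    simp [faaDiBrunoCoeff, ih (m := m + 1) (by omega), ih (m := m) (by omega)]

theorem faaDiBrunoCoeff_self (f : R[X]) (r : ℕ) :
    faaDiBrunoCoeff f r r = derivative f ^ r := by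
  induction r with
  | zero => rfl
  | succ r ih =>
    simp [faaDiBrunoCoeff, faaDiBrunoCoeff_eq_zero_of_lt f (Nat.lt_succ_self r), ih, pow_succ]

theorem iterate_derivative_comp (f g : R[X]) (r : ℕ) :
    derivative^[r] (g.comp f) =
      ∑ m ∈ Finset.range (r + 1), faaDiBrunoCoeff f r m * (derivative^[m] g).comp f := by
  induction r with
  | zero => simp [faaDiBrunoCoeff]
  | succ r ih =>
    have hterm (m : ℕ) : derivative (faaDiBrunoCoeff f r m * (derivative^[m] g).comp f) =
        derivative (faaDiBrunoCoeff f r m) * (derivative^[m] g).comp f +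
          faaDiBrunoCoeff f r m * derivative f * (derivative^[m + 1] g).comp f := by
      rw [derivative_mul, derivative_comp, Function.iterate_succ_apply']
      ring
    rw [Function.iterate_succ_apply', ih, map_sum, Finset.sum_congr rfl fun m _ => hterm m,
      Finset.sum_add_distrib, Finset.sum_range_succ' _ (r + 1), Finset.sum_range_succ']
    simp only [faaDiBrunoCoeff, add_mul, Finset.sum_add_distrib]
    rw [Finset.sum_range_succ (fun m => derivative (faaDiBrunoCoeff f r (m + 1)) * _),
      faaDiBrunoCoeff_eq_zero_of_lt f (Nat.lt_succ_self r), derivative_zero, zero_mul, add_zero]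
    ring

end CommSemiring

section CommRing

variable [CommRing R] {s : ℕ}

theorem iterate_derivative_comp_matrix_eq_mul (f : R[X]) (g : Fin s → R[X]) :
    Matrix.of (fun r c : Fin s => derivative^[r] ((g c).comp f)) =
      Matrix.of (fun r m : Fin s => faaDiBrunoCoeff f r m) *
        (Matrix.of fun m c : Fin s => derivative^[m] (g c)).map (compRingHom f) := by
  refine Matrix.ext fun r c => ?_
  rw [Matrix.of_apply, iterate_derivative_comp, Matrix.mul_apply,
    Finset.sum_subset (Finset.range_subset_range.mpr r.isLt) fun m _ hm => by
      rw [faaDiBrunoCoeff_eq_zero_of_lt f (by simpa using hm), zero_mul],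
    ← Fin.sum_univ_eq_sum_range]
  rfl

theorem det_iterate_derivative_comp (f : R[X]) (g : Fin s → R[X]) :
    (Matrix.of fun r c : Fin s => derivative^[r] ((g c).comp f)).det =
      derivative f ^ (∑ r : Fin s, (r : ℕ)) *
        (Matrix.of fun m c : Fin s => derivative^[m] (g c)).det.comp f := by
  rw [iterate_derivative_comp_matrix_eq_mul, Matrix.det_mul, ← coe_compRingHom_apply,
    RingHom.map_det,
    Matrix.det_of_isLowerTriangular (Matrix.of fun r m : Fin s => faaDiBrunoCoeff f r m)
      fun r m h => faaDiBrunoCoeff_eq_zero_of_lt f h,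
    ← Finset.prod_pow_eq_pow_sum]
  simp only [Matrix.of_apply, faaDiBrunoCoeff_self]
  rfl

theorem det_iterate_derivative_X_pow (s : ℕ) :
    (Matrix.of fun m c : Fin s => derivative^[m] (X ^ ((c : ℕ) + 1) : R[X])).det =
      C (Matrix.of fun m c : Fin s => (((c : ℕ) + 1).descFactorial m : R)).det * X ^ s := by
  -- multiplying row `m` by `Xᵐ` and dividing column `c` by `X^(c+1)` leaves a constant matrix
  have hscale : Matrix.diagonal (fun m : Fin s => (X : R[X]) ^ (m : ℕ)) *
      Matrix.of (fun m c : Fin s => derivative^[m] (X ^ ((c : ℕ) + 1) : R[X])) =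
      (Matrix.of fun m c : Fin s => (((c : ℕ) + 1).descFactorial m : R)).map C *
        Matrix.diagonal (fun c : Fin s => (X : R[X]) ^ ((c : ℕ) + 1)) := by
    ext m c
    rw [Matrix.diagonal_mul, Matrix.mul_diagonal, Matrix.map_apply, Matrix.of_apply,
      Matrix.of_apply, iterate_derivative_X_pow_eq_C_mul]
    rcases le_or_gt (m : ℕ) ((c : ℕ) + 1) with h | h
    · rw [mul_left_comm, ← pow_add, Nat.add_sub_cancel' h]
    · simp [Nat.descFactorial_eq_zero_iff_lt.mpr h]
  have hdet := congrArg Matrix.det hscale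
  rw [Matrix.det_mul, Matrix.det_mul, Matrix.det_diagonal, Matrix.det_diagonal,
    ← RingHom.mapMatrix_apply, ← RingHom.map_det, Finset.prod_pow_eq_pow_sum,
    Finset.prod_pow_eq_pow_sum, Finset.sum_add_distrib,
    pow_add, mul_left_comm] at hdet
  simpa using (isRegular_X_pow _).left hdet

theorem det_iterate_derivative_pow (f : R[X]) (s : ℕ) :
    (Matrix.of fun r c : Fin s => derivative^[r] (f ^ ((c : ℕ) + 1))).det =
      C (Matrix.of fun m c : Fin s => (((c : ℕ) + 1).descFactorial m : R)).det *
        derivative f ^ (∑ r : Fin s, (r : ℕ)) * f ^ s := by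
  simp_rw [← X_pow_comp (p := f)]
  rw [det_iterate_derivative_comp, det_iterate_derivative_X_pow, mul_comp, C_comp, X_pow_comp]
  ring

end CommRing

section Domain

variable [CommRing R] [IsDomain R]

theorem setOf_eval_eq_zero_eq_roots_toFinset [DecidableEq R] {q : R[X]} (hq : q ≠ 0) :
    {x | q.eval x = 0} = ↑q.roots.toFinset := by
  ext x
  simp [hq]

theorem det_descFactorial_ne_zero [CharZero R] (s : ℕ) :
    (Matrix.of fun m c : Fin s => (((c : ℕ) + 1).descFactorial m : R)).det ≠ 0 := by
  have hpoch : (Matrix.of fun m c : Fin s => (((c : ℕ) + 1).descFactorial m : R)) =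
      (Matrix.of fun c m : Fin s => (descPochhammer R m).eval ((c : R) + 1)).transpose := by
    ext m c
    simp [← descPochhammer_eval_eq_descFactorial]
  rw [hpoch, Matrix.det_transpose, ← Matrix.det_eval_matrixOfPolynomials_eq_det_vandermonde
      (fun c : Fin s => (c : R) + 1) (fun m => descPochhammer R m)
      (fun m => descPochhammer_natDegree R m) (fun m => monic_descPochhammer R m),
    Matrix.det_vandermonde_ne_zero_iff]
  intro i j hij
  exact Fin.ext (by simpa using hij)

end Domain

theorem eval_eq_sum_range_coeff_succ_mul_pow [Semiring R] {Q : R[X]} {k : ℕ}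
    (h0 : Q.coeff 0 = 0) (hk : Q.natDegree ≤ k) (y : R) :
    Q.eval y = ∑ i ∈ Finset.range k, Q.coeff (i + 1) * y ^ (i + 1) := by
  rw [eval_eq_sum_range' (Nat.lt_succ_of_le hk), Finset.sum_range_succ', h0, zero_mul, add_zero]

theorem iteratedDeriv_eval {𝕜 : Type*} [NontriviallyNormedField 𝕜] (q : 𝕜[X]) (r : ℕ) :
    iteratedDeriv r (fun y => q.eval y) = fun y => (derivative^[r] q).eval y := by
  induction r with
  | zero => simp
  | succ r ih =>
    ext y
    rw [iteratedDeriv_succ, ih, Function.iterate_succ_apply', Polynomial.deriv]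

end Polynomial

theorem wronskianR_pow_eq (f : ℝ[X]) (s : ℕ) (x : ℝ) :
    wronskianR (fun i y => f.eval y ^ (i + 1)) s x =
      (Matrix.of fun m c : Fin s => (((c : ℕ) + 1).descFactorial m : ℝ)).det *
        (derivative f).eval x ^ (∑ r : Fin s, (r : ℕ)) * f.eval x ^ s := by
  have hmat : (Matrix.of fun r c : Fin s =>
      iteratedDeriv r (fun y => f.eval y ^ ((c : ℕ) + 1)) x) =
      (Matrix.of fun r c : Fin s => derivative^[r] (f ^ ((c : ℕ) + 1))).map (evalRingHom x) := by
    ext r c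
    simp_rw [← eval_pow, iteratedDeriv_eval]
    rfl
  rw [wronskianR, hmat, ← RingHom.mapMatrix_apply, ← RingHom.map_det, det_iterate_derivative_pow]
  simp

theorem setOf_exists_wronskianR_pow_eq_zero (f : ℝ[X]) {k : ℕ} (hk : 2 ≤ k) :
    {x | ∃ s, 1 ≤ s ∧ s ≤ k ∧ wronskianR (fun i y => f.eval y ^ (i + 1)) s x = 0} =
      {x | f.eval x = 0 ∨ (derivative f).eval x = 0} := by
  ext x
  simp only [Set.mem_ofPred_eq, wronskianR_pow_eq]
  constructor
  · rintro ⟨s, -, -, h⟩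
    rcases mul_eq_zero.mp h with h | h
    · rcases mul_eq_zero.mp h with h | h
      · exact absurd h (det_descFactorial_ne_zero s)
      · exact Or.inr (pow_eq_zero_iff'.mp h).1
    · exact Or.inl (pow_eq_zero_iff'.mp h).1
  · rintro (h | h)
    · exact ⟨1, le_rfl, by omega, by simp [h]⟩
    · exact ⟨2, by omega, hk, by simp [h]⟩

namespace Polynomial.Chebyshev

theorem neg_one_le_eval_T_two_mul {R : Type*} [CommRing R] [LinearOrder R] [IsStrictOrderedRing R]
    (n : ℤ) (x : R) : -1 ≤ (T R (2 * n)).eval x := by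
  rw [T_mul, eval_comp, T_two]
  simp only [eval_sub, eval_mul, eval_pow, eval_X, eval_ofNat, eval_one]
  nlinarith [sq_nonneg ((T R n).eval x)]

theorem ncard_setOf_eval_T_real_eq_zero (n : ℕ) : {x : ℝ | (T ℝ n).eval x = 0}.ncard = n := by
  rw [setOf_eval_eq_zero_eq_roots_toFinset (T_ne_zero ℝ n), roots_T_real, Finset.val_toFinset,
    Set.ncard_coe_finset, Finset.card_image_of_injOn
      ((Finset.range n).nodup_map_iff_injOn.mp (roots_T_real_nodup n)), Finset.card_range]

theorem ncard_setOf_eval_U_real_eq_zero (n : ℕ) : {x : ℝ | (U ℝ n).eval x = 0}.ncard = n := by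
  rw [setOf_eval_eq_zero_eq_roots_toFinset (U_ne_zero ℝ n (by omega)), roots_U_real,
    Finset.val_toFinset, Set.ncard_coe_finset, Finset.card_image_of_injOn
      ((Finset.range n).nodup_map_iff_injOn.mp (roots_U_real_nodup n)), Finset.card_range]

theorem natDegree_X_mul_T_comp_X_sub_C_le {R : Type*} [CommRing R] [IsDomain R] [NeZero (2 : R)]
    {k : ℕ} (hk : 1 ≤ k) (a : R) :
    (X * (T R (k - 1 : ℕ)).comp (X - Polynomial.C a)).natDegree ≤ k := by
  calc _ ≤ 1 + (k - 1) * 1 := by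
        refine natDegree_mul_le.trans (add_le_add natDegree_X_le ?_)
        rw [natDegree_comp, natDegree_T, natDegree_X_sub_C, Int.natAbs_natCast]
    _ = k := by omega

theorem X_mul_T_comp_X_sub_C_comp_T_add_C {R : Type*} [CommRing R] (j m : ℤ) (a : R) :
    (X * (T R j).comp (X - Polynomial.C a)).comp (T R m + Polynomial.C a) =
      (T R m + Polynomial.C a) * T R (j * m) := by
  rw [mul_comp, X_comp, comp_assoc, sub_comp, X_comp, C_comp, add_sub_cancel_right, T_mul]

theorem eval_T_two_mul_add_C_two_pos (n : ℕ) (x : ℝ) :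
    0 < (T ℝ (2 * n : ℕ) + Polynomial.C 2).eval x := by
  have := neg_one_le_eval_T_two_mul (n : ℤ) x
  rw [eval_add, eval_C, Nat.cast_mul, Nat.cast_ofNat]
  linarith

theorem setOf_exists_wronskianR_pow_T_two_mul_add_C_two_eq_zero {n k : ℕ} (hn : n ≠ 0)
    (hk : 2 ≤ k) :
    {x | ∃ s, 1 ≤ s ∧ s ≤ k ∧
        wronskianR (fun i y => (T ℝ (2 * n : ℕ) + Polynomial.C 2).eval y ^ (i + 1)) s x = 0} =
      {x | (U ℝ (2 * n - 1 : ℕ)).eval x = 0} := by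
  rw [setOf_exists_wronskianR_pow_eq_zero _ hk, derivative_add, derivative_C, add_zero]
  ext x
  have h2n : ((2 * n : ℕ) : ℝ) ≠ 0 := by positivity
  rw [Set.mem_ofPred_eq, Set.mem_ofPred_eq, or_iff_right (eval_T_two_mul_add_C_two_pos n x).ne',
    T_derivative_eq_U, eval_mul, eval_intCast, Int.cast_natCast, mul_eq_zero, or_iff_right h2n,
    Nat.cast_sub (by omega), Nat.cast_one]

end Polynomial.Chebyshev

open Polynomial.Chebyshev in
/-- Optimality of the Wronskian bound: for every `k ≥ 2` and every `p`, there are a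
non-constant polynomial `f`, positive integer exponents `α_1, …, α_k` and real constants
`a_1, …, a_k` such that, for `g = Σ_i a_i f^{α_i}` and
`Υ = {x : some Wronskian W(f^{α_1}, …, f^{α_i}) vanishes at x}`, the set `Υ` is finite
with `|Υ| ≥ p` and `Z_ℝ(g) ≥ (1 + |Υ|)(k - 1) + Z_ℝ(f)`. -/
theorem stmt17 (k p : ℕ) (hk : 2 ≤ k) :
    ∃ (f : Polynomial ℝ) (α : ℕ → ℕ) (a : ℕ → ℝ),
      0 < f.natDegree ∧ (∀ i < k, 0 < α i) ∧
      {x : ℝ | ∃ s, 1 ≤ s ∧ s ≤ k ∧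
          wronskianR (fun i y => f.eval y ^ α i) s x = 0}.Finite ∧
      p ≤ {x : ℝ | ∃ s, 1 ≤ s ∧ s ≤ k ∧
          wronskianR (fun i y => f.eval y ^ α i) s x = 0}.ncard ∧
      (1 + {x : ℝ | ∃ s, 1 ≤ s ∧ s ≤ k ∧
            wronskianR (fun i y => f.eval y ^ α i) s x = 0}.ncard) * (k - 1)
          + {x : ℝ | f.eval x = 0}.ncard ≤
        {x : ℝ | (∑ i ∈ Finset.range k, a i * f.eval x ^ α i) = 0}.ncard := by
  set f : ℝ[X] := T ℝ (2 * (p + 1) : ℕ) + Polynomial.C 2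
  set Q : ℝ[X] := X * (T ℝ (k - 1 : ℕ)).comp (X - Polynomial.C 2)
  have hf_pos := eval_T_two_mul_add_C_two_pos (p + 1)
  have hΥ := setOf_exists_wronskianR_pow_T_two_mul_add_C_two_eq_zero (by omega : p + 1 ≠ 0) hk
  have hZf : {x | f.eval x = 0} = ∅ := Set.eq_empty_of_forall_notMem fun x => (hf_pos x).ne'
  have hZg : {x | ∑ i ∈ Finset.range k, Q.coeff (i + 1) * f.eval x ^ (i + 1) = 0} =
      {x | (T ℝ ((k - 1) * (2 * (p + 1)) : ℕ)).eval x = 0} := by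
    ext x
    rw [Set.mem_ofPred_eq, Set.mem_ofPred_eq, ← eval_eq_sum_range_coeff_succ_mul_pow (by simp)
      (natDegree_X_mul_T_comp_X_sub_C_le (by omega) 2), ← eval_comp,
      X_mul_T_comp_X_sub_C_comp_T_add_C, eval_mul, mul_eq_zero, or_iff_right (hf_pos x).ne',
      Nat.cast_mul]
    push_cast
    rfl
  refine ⟨f, fun i => i + 1, fun i => Q.coeff (i + 1), ?_, fun i _ => i.succ_pos, ?_, ?_, ?_⟩
  · rw [natDegree_add_C, natDegree_T, Int.natAbs_natCast]
    omega
  · exact hΥ ▸ Set.finite_of_ncard_ne_zero (by rw [ncard_setOf_eval_U_real_eq_zero]; omega)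
  · rw [hΥ, ncard_setOf_eval_U_real_eq_zero]
    omega
  · rw [hΥ, hZg, hZf, ncard_setOf_eval_U_real_eq_zero, ncard_setOf_eval_T_real_eq_zero,
      Set.ncard_empty, add_zero, Nat.add_sub_cancel' (by omega), mul_comm]
end

section
/- Let f_1, …, f_k be real analytic functions on a real interval I. Then the family (f_1, …, f_k) is linearly dependent over ℝ if and only if the Wronskian W(f_1, …, f_k) is identically zero on I. -/
/-!
By Leibniz' rule the Wronskian matrix of `p f₀, …, p fₖ` is a lower triangular matrix with
diagonal `p` times that of `f₀, …, fₖ`, so its Wronskian is `p ^ (k + 1) W(f₀, …, fₖ)`; and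
expanding along the first column, `W(1, g₁, …, gₖ) = W(g₁', …, gₖ')`. Hence near a point where
`f₀ ≠ 0`, the vanishing of `W(f₀, …, fₖ)` forces that of `W((f₁ / f₀)', …, (fₖ / f₀)')`. By
induction these derivatives satisfy a nontrivial linear relation; integrating it and multiplying by
`f₀` gives one among the `fᵢ` on a small interval, which the identity theorem spreads over the
interior of `I`, and continuity over `I`. Conversely, a linear relation among the functions is one
among the columns of the Wronskian matrix.
-/

open Topology

noncomputable def wronskian (f : ℕ → ℝ → ℝ) (k : ℕ) (x : ℝ) : ℝ :=
  (Matrix.of fun r c : Fin k => iteratedDeriv (r : ℕ) (f (c : ℕ)) x).det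

def LinDepOn (f : ℕ → ℝ → ℝ) (k : ℕ) (s : Set ℝ) : Prop :=
  ∃ a : ℕ → ℝ, (∃ i < k, a i ≠ 0) ∧ ∀ x ∈ s, ∑ i ∈ Finset.range k, a i * f i x = 0

section Wronskian

variable {f g : ℕ → ℝ → ℝ} {k : ℕ} {x : ℝ}

theorem wronskianOn_eq_wronskian {s : Set ℝ} (hs : s ∈ 𝓝 x) :
    wronskianOn s f k x = wronskian f k x := by
  unfold wronskianOn wronskian
  congr 1
  ext r c
  rw [Matrix.of_apply, Matrix.of_apply, iteratedDerivWithin, iteratedDeriv,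
    ← iteratedFDerivWithin_univ, ← iteratedFDerivWithin_inter (s := Set.univ) hs, Set.univ_inter]

theorem wronskian_congr (h : ∀ c < k, f c =ᶠ[𝓝 x] g c) : wronskian f k x = wronskian g k x := by
  unfold wronskian
  congr 1
  ext r c
  exact (h c c.isLt).iteratedDeriv_eq r

theorem wronskian_mul_left {p : ℝ → ℝ} (hp : ContDiffAt ℝ (k - 1 : ℕ) p x)
    (hf : ∀ c < k, ContDiffAt ℝ (k - 1 : ℕ) (f c) x) :
    wronskian (fun c => p * f c) k x = p x ^ k * wronskian f k x := by
  let L : Matrix (Fin k) (Fin k) ℝ :=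
    Matrix.of fun r s => ((r : ℕ).choose s : ℝ) * iteratedDeriv (r - s) p x
  have hL : L.det = p x ^ k := by
    rw [Matrix.det_of_isLowerTriangular L fun r s hrs => by
      simp [L, Nat.choose_eq_zero_of_lt (show (r : ℕ) < s from OrderDual.toDual_lt_toDual.1 hrs)]]
    simp [L]
  suffices (Matrix.of fun r c : Fin k => iteratedDeriv r (p * f c) x) =
      L * Matrix.of fun r c : Fin k => iteratedDeriv r (f c) x by
    rw [wronskian, this, Matrix.det_mul, hL, wronskian]
  ext r c
  have hr : ((r : ℕ) : WithTop ℕ∞) ≤ (k - 1 : ℕ) := by exact_mod_cast (by omega : (r : ℕ) ≤ k - 1)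
  simp only [L, Matrix.of_apply, Matrix.mul_apply]
  rw [mul_comm p, iteratedDeriv_mul ((hf c c.isLt).of_le hr) (hp.of_le hr),
    Fin.sum_univ_eq_sum_range
      (fun s => ((r : ℕ).choose s : ℝ) * iteratedDeriv (r - s) p x * iteratedDeriv s (f c) x) k]
  refine (Finset.sum_subset (Finset.range_subset_range.2 (by omega)) fun s _ hs => ?_).trans
    (Finset.sum_congr rfl fun s _ => by ring)
  simp [Nat.choose_eq_zero_of_lt (by simpa using hs : (r : ℕ) < s)]

theorem wronskian_succ_of_eventuallyEq_one (h : f 0 =ᶠ[𝓝 x] 1) :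
    wronskian f (k + 1) x = wronskian (fun c => deriv (f (c + 1))) k x := by
  have hcol : ∀ r : Fin (k + 1), iteratedDeriv r (f 0) x = if r = 0 then 1 else 0 := by
    intro r
    rw [h.iteratedDeriv_eq, Pi.one_def, iteratedDeriv_const]
    exact if_congr Fin.val_eq_zero_iff rfl rfl
  rw [wronskian, Matrix.det_succ_column_zero,
    Finset.sum_eq_single 0 (fun r _ hr => by simp [hcol, hr]) (by simp)]
  simp only [Matrix.of_apply, Fin.val_zero, iteratedDeriv_zero, h.eq_of_nhds, Pi.one_apply,
    pow_zero, one_mul, Fin.succAbove_zero]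
  rw [wronskian]
  congr 1
  ext r c
  simp [iteratedDeriv_succ']

theorem wronskian_succ_eq_pow_mul_wronskian_deriv_div (h0 : f 0 x ≠ 0)
    (hf : ∀ c < k + 1, ContDiffAt ℝ k (f c) x) :
    wronskian f (k + 1) x =
      f 0 x ^ (k + 1) * wronskian (fun c => deriv (f (c + 1) / f 0)) k x := by
  have hne : ∀ᶠ y in 𝓝 x, f 0 y ≠ 0 := (hf 0 k.succ_pos).continuousAt.eventually_ne h0
  have hfg : ∀ c < k + 1, f c =ᶠ[𝓝 x] f 0 * (f c / f 0) := fun c _ => by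
    filter_upwards [hne] with y hy using (mul_div_cancel₀ _ hy).symm
  rw [wronskian_congr hfg, wronskian_mul_left (hf 0 k.succ_pos)
    fun c hc => (hf c hc).div (hf 0 k.succ_pos) h0, wronskian_succ_of_eventuallyEq_one]
  filter_upwards [hne] with y hy using div_self hy

end Wronskian

section LinDepOn

variable {f g : ℕ → ℝ → ℝ} {k : ℕ} {s : Set ℝ}

theorem LinDepOn.wronskianOn_eq_zero (hs : UniqueDiffOn ℝ s)
    (hf : ∀ i < k, ContDiffOn ℝ (k - 1 : ℕ) (f i) s) (h : LinDepOn f k s) {x : ℝ} (hx : x ∈ s) :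
    wronskianOn s f k x = 0 := by
  obtain ⟨a, ⟨i, hik, hi⟩, hrel⟩ := h
  rw [wronskianOn, ← Matrix.exists_mulVec_eq_zero_iff]
  refine ⟨fun c => a c, fun ha => hi (congrFun ha ⟨i, hik⟩), ?_⟩
  ext r
  have hr : ((r : ℕ) : WithTop ℕ∞) ≤ (k - 1 : ℕ) := by exact_mod_cast (by omega : (r : ℕ) ≤ k - 1)
  have hsum : iteratedDerivWithin r (fun y => ∑ i ∈ Finset.range k, a i * f i y) s x = 0 := by
    rw [iteratedDerivWithin_congr (fun y hy => hrel y hy) hx, iteratedDerivWithin_const]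
    simp
  rw [iteratedDerivWithin_fun_sum hx hs fun i hi =>
      contDiffWithinAt_const.mul (((hf i (Finset.mem_range.1 hi)).of_le hr) x hx)] at hsum
  simp only [Matrix.mulVec, dotProduct, Matrix.of_apply, Pi.zero_apply]
  rw [Fin.sum_univ_eq_sum_range (fun c => iteratedDerivWithin r (f c) s x * a c) k, ← hsum]
  refine Finset.sum_congr rfl fun i hi => ?_
  rw [iteratedDerivWithin_const_mul hx hs _ (((hf i (Finset.mem_range.1 hi)).of_le hr) x hx),
    mul_comm]

theorem linDepOn_succ_of_eqOn_zero (h : ∀ x ∈ s, f 0 x = 0) : LinDepOn f (k + 1) s :=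
  ⟨fun i => if i = 0 then 1 else 0, ⟨0, k.succ_pos, one_ne_zero⟩, fun x hx => by
    simp [Finset.sum_ite_eq', h x hx]⟩

theorem LinDepOn.mul_left {p : ℝ → ℝ} (h : LinDepOn g k s)
    (hfg : ∀ i < k, ∀ x ∈ s, f i x = p x * g i x) : LinDepOn f k s := by
  obtain ⟨a, ha, hrel⟩ := h
  refine ⟨a, ha, fun x hx => ?_⟩
  rw [Finset.sum_congr rfl fun i hi => by rw [hfg i (Finset.mem_range.1 hi) x hx],
    ← mul_zero (p x), ← hrel x hx, Finset.mul_sum]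
  exact Finset.sum_congr rfl fun i _ => by ring

theorem LinDepOn.of_deriv (hs : IsOpen s) (hs' : IsPreconnected s) (h0 : ∀ x ∈ s, f 0 x = 1)
    (hf : ∀ i < k, DifferentiableOn ℝ (f (i + 1)) s)
    (h : LinDepOn (fun i => deriv (f (i + 1))) k s) : LinDepOn f (k + 1) s := by
  obtain ⟨a, ⟨i, hik, hi⟩, hrel⟩ := h
  have hdiff : ∀ x ∈ s, ∀ i ∈ Finset.range k, DifferentiableAt ℝ (fun y => a i * f (i + 1) y) x :=
    fun x hx i hi => ((hf i (Finset.mem_range.1 hi)).differentiableAt (hs.mem_nhds hx)).const_mul _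
  obtain ⟨C, hC⟩ := hs.exists_is_const_of_deriv_eq_zero hs'
    (fun x hx => (DifferentiableAt.fun_sum (hdiff x hx)).differentiableWithinAt)
    fun x hx => by
      rw [deriv_fun_sum (hdiff x hx), Pi.zero_apply, ← hrel x hx]
      exact Finset.sum_congr rfl fun i hi =>
        deriv_const_mul _ ((hf i (Finset.mem_range.1 hi)).differentiableAt (hs.mem_nhds hx))
  refine ⟨fun j => if j = 0 then -C else a (j - 1), ⟨i + 1, by omega, by simpa using hi⟩,
    fun x hx => ?_⟩
  rw [Finset.sum_range_succ']
  simp [hC x hx, h0 x hx]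

theorem LinDepOn.of_analyticOnNhd_of_mem_nhds {U : Set ℝ} {x₀ : ℝ}
    (hf : ∀ i < k, AnalyticOnNhd ℝ (f i) U) (hU : IsPreconnected U) (hx₀ : x₀ ∈ U)
    (hs : s ∈ 𝓝 x₀) (h : LinDepOn f k s) : LinDepOn f k U := by
  obtain ⟨a, ha, hrel⟩ := h
  refine ⟨a, ha, fun x hx => ?_⟩
  have hφ : AnalyticOnNhd ℝ (fun y => ∑ i ∈ Finset.range k, a i * f i y) U :=
    Finset.analyticOnNhd_fun_sum _ fun i hi =>
      analyticOnNhd_const.mul (hf i (Finset.mem_range.1 hi))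
  exact hφ.eqOn_zero_of_preconnected_of_eventuallyEq_zero hU hx₀
    (Filter.mem_of_superset hs fun y hy => hrel y hy) hx

theorem LinDepOn.of_subset_closure {t : Set ℝ} (hf : ∀ i < k, ContinuousOn (f i) s)
    (hts : t ⊆ s) (hst : s ⊆ closure t) (h : LinDepOn f k t) : LinDepOn f k s := by
  obtain ⟨a, ha, hrel⟩ := h
  have hφ : ContinuousOn (fun y => ∑ i ∈ Finset.range k, a i * f i y) s :=
    continuousOn_finsetSum _ fun i hi => continuousOn_const.mul (hf i (Finset.mem_range.1 hi))
  exact ⟨a, ha, Set.EqOn.of_subset_closure (g := fun _ => 0) hrel hφ continuousOn_const hts hst⟩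

end LinDepOn

theorem linDepOn_of_wronskian_eq_zero {f : ℕ → ℝ → ℝ} {k : ℕ} {U : Set ℝ} (hUo : IsOpen U)
    (hUc : IsPreconnected U) (hUne : U.Nonempty) (hf : ∀ i < k, AnalyticOnNhd ℝ (f i) U)
    (hW : ∀ x ∈ U, wronskian f k x = 0) : LinDepOn f k U := by
  induction k generalizing f U with
  | zero =>
    obtain ⟨x, hx⟩ := hUne
    exact absurd (hW x hx) (by simp [wronskian])
  | succ k ih =>
    by_cases h0 : ∀ x ∈ U, f 0 x = 0
    · exact linDepOn_succ_of_eqOn_zero h0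
    obtain ⟨x₀, hx₀, hfx₀⟩ := not_forall₂.1 h0
    obtain ⟨ε, hε, hball⟩ := Metric.isOpen_iff.1
      ((hf 0 k.succ_pos).continuousOn.isOpen_inter_preimage hUo isOpen_compl_singleton)
      x₀ ⟨hx₀, hfx₀⟩
    set V := Metric.ball x₀ ε
    have hVU : V ⊆ U := fun y hy => (hball hy).1
    have hV0 : ∀ y ∈ V, f 0 y ≠ 0 := fun y hy => (hball hy).2
    have hfV : ∀ i < k + 1, AnalyticOnNhd ℝ (f i) V := fun i hi => (hf i hi).mono hVU
    have hg : ∀ i < k + 1, AnalyticOnNhd ℝ (f i / f 0) V :=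
      fun i hi => (hfV i hi).div (hfV 0 k.succ_pos) hV0
    have hWg : ∀ x ∈ V, wronskian (fun i => deriv (f (i + 1) / f 0)) k x = 0 := by
      intro x hx
      have hWx := hW x (hVU hx)
      rw [wronskian_succ_eq_pow_mul_wronskian_deriv_div (hV0 x hx)
        fun i hi => (hfV i hi x hx).contDiffAt] at hWx
      exact (mul_eq_zero.1 hWx).resolve_left (pow_ne_zero _ (hV0 x hx))
    have hgV : LinDepOn (fun i => f i / f 0) (k + 1) V :=
      .of_deriv Metric.isOpen_ball (convex_ball x₀ ε).isPreconnected
        (fun y hy => div_self (hV0 y hy)) (fun i hi => (hg (i + 1) (by omega)).differentiableOn)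
        (ih Metric.isOpen_ball (convex_ball x₀ ε).isPreconnected ⟨x₀, Metric.mem_ball_self hε⟩
          (fun i hi => (hg (i + 1) (by omega)).deriv) hWg)
    exact (hgV.mul_left fun i _ y hy => (mul_div_cancel₀ _ (hV0 y hy)).symm)
      |>.of_analyticOnNhd_of_mem_nhds hf hUc hx₀ (Metric.ball_mem_nhds x₀ hε)

theorem stmt18_general (k : ℕ) (I : Set ℝ) (hI : I.OrdConnected) (hI' : I.Nontrivial)
    (f : ℕ → ℝ → ℝ) (hf : ∀ i < k, AnalyticOn ℝ (f i) I) :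
    (∃ a : ℕ → ℝ, (∃ i < k, a i ≠ 0) ∧
        ∀ x ∈ I, (∑ i ∈ Finset.range k, a i * f i x) = 0) ↔
      ∀ x ∈ I, wronskianOn I f k x = 0 := by
  have hconv : Convex ℝ I := hI.convex
  have hint : (interior I).Nonempty := hconv.nontrivial_iff_nonempty_interior.1 hI'
  have hdiff : UniqueDiffOn ℝ I := uniqueDiffOn_convex hconv hint
  refine ⟨fun h x hx =>
    LinDepOn.wronskianOn_eq_zero hdiff (fun i hi => (hf i hi).contDiffOn hdiff) h hx, fun hW => ?_⟩
  have hWint : ∀ x ∈ interior I, wronskian f k x = 0 := fun x hx => by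
    rw [← wronskianOn_eq_wronskian (mem_interior_iff_mem_nhds.1 hx)]
    exact hW x (interior_subset hx)
  have hint_dep : LinDepOn f k (interior I) :=
    linDepOn_of_wronskian_eq_zero isOpen_interior hconv.interior.isPreconnected hint
      (fun i hi => isOpen_interior.analyticOn_iff_analyticOnNhd.1 ((hf i hi).mono interior_subset))
      hWint
  refine hint_dep.of_subset_closure (fun i hi => (hf i hi).continuousOn) interior_subset ?_
  rw [hconv.closure_interior_eq_closure_of_nonempty_interior hint]
  exact subset_closure

/-- Bôcher's criterion: a family of analytic functions on an interval `I` is linearly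
dependent (as functions on `I`) if and only if its Wronskian vanishes identically on `I`. -/
theorem stmt18 (k : ℕ) (hk : 1 ≤ k) (I : Set ℝ) (hI : I.OrdConnected) (hI' : I.Nontrivial)
    (f : ℕ → ℝ → ℝ) (hf : ∀ i < k, AnalyticOn ℝ (f i) I) :
    (∃ a : ℕ → ℝ, (∃ i < k, a i ≠ 0) ∧
        ∀ x ∈ I, (∑ i ∈ Finset.range k, a i * f i x) = 0) ↔
      ∀ x ∈ I, wronskianOn I f k x = 0 :=
  stmt18_general k I hI hI' f hf
end

section
/- Let f_1, …, f_k be real functions that are (k−1)-times differentiable on a real interval I and do not vanish on I. Then for all x ∈ I, W(f_1, …, f_k)(x) = f_1(x)^k · W((f_2/f_1)′, …, (f_k/f_1)′)(x), where the Wronskian on the right-hand side is the Wronskian of the k−1 functions (f_2/f_1)′, …, (f_k/f_1)′. -/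
open Finset Matrix

theorem Set.OrdConnected.uniqueDiffOn_s19 {I : Set ℝ} (hI : I.OrdConnected) (hI' : I.Nontrivial) :
    UniqueDiffOn ℝ I := by
  obtain ⟨a, ha, b, hb, hab⟩ := hI'.exists_lt
  refine uniqueDiffOn_convex hI.convex ⟨(a + b) / 2, interior_mono (hI.out ha hb) ?_⟩
  rw [interior_Icc]
  constructor <;> linarith

section Wronskian

variable {s : Set ℝ} {x : ℝ}

theorem wronskianOn_congr_s19 {f g : ℕ → ℝ → ℝ} {n : ℕ} (hfg : ∀ i < n, Set.EqOn (f i) (g i) s)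
    (hx : x ∈ s) : wronskianOn s f n x = wronskianOn s g n x := by
  unfold wronskianOn
  congr 1
  ext r c
  exact iteratedDerivWithin_congr (hfg c c.isLt) hx

theorem wronskianOn_mul_left (hs : UniqueDiffOn ℝ s) (hx : x ∈ s) {h : ℝ → ℝ}
    {g : ℕ → ℝ → ℝ} {n : ℕ} (hh : ContDiffOn ℝ (n - 1 : ℕ) h s)
    (hg : ∀ i < n, ContDiffOn ℝ (n - 1 : ℕ) (g i) s) :
    wronskianOn s (fun i y => h y * g i y) n x = h x ^ n * wronskianOn s g n x := by
  set L : Matrix (Fin n) (Fin n) ℝ :=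
    of fun r i => ((r : ℕ).choose i : ℝ) * iteratedDerivWithin (r - i) h s x
  have hfactor : (of fun r c : Fin n => iteratedDerivWithin r (fun y => h y * g c y) s x) =
      L * of fun i c : Fin n => iteratedDerivWithin i (g c) s x := by
    ext r c
    have hr : ((r : ℕ) : WithTop ℕ∞) ≤ ((n - 1 : ℕ) : WithTop ℕ∞) := by
      exact_mod_cast Nat.le_sub_one_of_lt r.isLt
    rw [of_apply, show (fun y => h y * g c y) = g c * h from funext fun y => mul_comm _ _,
      iteratedDerivWithin_mul hx hs ((hg c c.isLt x hx).of_le hr) ((hh x hx).of_le hr), mul_apply]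
    simp only [L, of_apply]
    rw [Fin.sum_univ_eq_sum_range (fun i => ((r : ℕ).choose i : ℝ) *
      iteratedDerivWithin (r - i) h s x * iteratedDerivWithin i (g c) s x)]
    rw [← sum_subset (range_subset_range.mpr r.isLt) fun i _ hi => ?_]
    · exact sum_congr rfl fun i _ => by ring
    · simp [Nat.choose_eq_zero_of_lt (by simpa using hi : (r : ℕ) < i)]
  have hL : L.det = h x ^ n := by
    rw [det_of_isLowerTriangular L fun r i (hri : r < i) => by
      simp [L, Nat.choose_eq_zero_of_lt hri]]
    simp [L]
  rw [wronskianOn, hfactor, det_mul, hL, wronskianOn]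

theorem wronskianOn_succ_of_eqOn_one_s19 (hx : x ∈ s) {g : ℕ → ℝ → ℝ} {n : ℕ}
    (hg₀ : Set.EqOn (g 0) 1 s) :
    wronskianOn s g (n + 1) x = wronskianOn s (fun i => derivWithin (g (i + 1)) s) n x := by
  have hcol : ∀ i : ℕ, iteratedDerivWithin (i + 1) (g 0) s x = 0 := fun i => by
    rw [iteratedDerivWithin_congr hg₀ hx, Pi.one_def, iteratedDerivWithin_const,
      if_neg i.succ_ne_zero]
  rw [wronskianOn, det_succ_column_zero, Fin.sum_univ_succ]
  simp only [of_apply, Fin.val_succ, Fin.val_zero, hcol, iteratedDerivWithin_zero, hg₀ hx,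
    Pi.one_apply, pow_zero, one_mul, mul_zero, zero_mul, sum_const_zero, add_zero,
    Fin.succAbove_zero]
  congr 1
  ext r c
  simp [iteratedDerivWithin_succ']

end Wronskian

theorem stmt19_general (k : ℕ) (I : Set ℝ) (hI : I.OrdConnected) (hI' : I.Nontrivial)
    (f : ℕ → ℝ → ℝ)
    (hdiff : ∀ i < k, ContDiffOn ℝ (k - 1 : ℕ) (f i) I)
    (hnv : ∀ i < k, ∀ x ∈ I, f i x ≠ 0) :
    ∀ x ∈ I,
      wronskianOn I f k x =
        (f 0 x) ^ k *
          wronskianOn I (fun i => derivWithin (fun y => f (i + 1) y / f 0 y) I) (k - 1) x := by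
  intro x hx
  obtain _ | j := k
  · simp [wronskianOn]
  have hf₀ : ∀ y ∈ I, f 0 y ≠ 0 := hnv 0 j.succ_pos
  have hfg : ∀ i < j + 1, Set.EqOn (f i) (fun y => f 0 y * (f i y / f 0 y)) I :=
    fun i _ y hy => (mul_div_cancel₀ _ (hf₀ y hy)).symm
  rw [wronskianOn_congr_s19 hfg hx, wronskianOn_mul_left (g := fun i y => f i y / f 0 y)
    (hI.uniqueDiffOn_s19 hI') hx (hdiff 0 j.succ_pos)
    (fun i hi => (hdiff i hi).div (hdiff 0 j.succ_pos) hf₀),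
    wronskianOn_succ_of_eqOn_one_s19 hx (fun y hy => div_self (hf₀ y hy))]
  rfl

/-- If `f 0, …, f (k-1)` are `(k-1)`-times differentiable on an interval `I` and do not
vanish on `I`, then on `I` one has
`W(f_1, …, f_k) = f_1^k · W((f_2/f_1)′, …, (f_k/f_1)′)`. -/
theorem stmt19 (k : ℕ) (hk : 1 ≤ k) (I : Set ℝ) (hI : I.OrdConnected) (hI' : I.Nontrivial)
    (f : ℕ → ℝ → ℝ)
    (hdiff : ∀ i < k, ContDiffOn ℝ (k - 1 : ℕ) (f i) I)
    (hnv : ∀ i < k, ∀ x ∈ I, f i x ≠ 0) :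
    ∀ x ∈ I,
      wronskianOn I f k x =
        (f 0 x) ^ k *
          wronskianOn I (fun i => derivWithin (fun y => f (i + 1) y / f 0 y) I) (k - 1) x :=
  stmt19_general k I hI hI' f hdiff hnv
end
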